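/- arXiv:math/0610905 — 8 statements merged into one kernel-verified Lean document; each statement's English description precedes it below -/
import Mathlib

section
/- Let (Ω,P) be a probability space, Ψ an Orlicz function, and g ∈ L^∞(Ω,P) a function that is not P-almost everywhere zero. Then the Luxemburg norm of g satisfies ‖g‖_Ψ ≤ ‖g‖_∞ / Ψ⁻¹(‖g‖_∞/‖g‖₁); equivalently, ∫_Ω Ψ( |g| · Ψ⁻¹(‖g‖_∞/‖g‖₁) / ‖g‖_∞ ) dP ≤ 1, where ‖g‖_∞ is the essential supremum of |g| and ‖g‖₁ = ∫_Ω |g| dP. -/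
open MeasureTheory

/-- The Luxemburg norm of a complex-valued function with respect to an Orlicz
function `Ψ` and a measure `μ`, with the convention `inf ∅ = ∞`. -/
noncomputable def luxNorm {α : Type*} [MeasurableSpace α] (Ψ : ℝ → ℝ)
    (μ : Measure α) (f : α → ℂ) : ENNReal :=
  sInf {C : ENNReal | ∃ c : ℝ, 0 < c ∧ C = ENNReal.ofReal c ∧
    (∫⁻ a, ENNReal.ofReal (Ψ (‖f a‖ / c)) ∂μ) ≤ 1}

/-!
Put `M = ‖g‖_∞`, `L = ‖g‖₁` and `s = Ψ⁻¹(M / L)`. Since `|g| ≤ M` a.e., the point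
`|g| s / M` lies on the segment from `0` to `s`, so convexity and `Ψ 0 = 0` give
`Ψ(|g| s / M) ≤ (|g| / M) Ψ s = |g| / L`, whose integral is `1`; so `C = M / s` is admissible
in the definition of the Luxemburg norm.
-/

theorem ConvexOn.map_smul_le_mul {E : Type*} [AddCommGroup E] [Module ℝ E] {S : Set E}
    {f : E → ℝ} (hf : ConvexOn ℝ S f) (h₀ : (0 : E) ∈ S) (hf₀ : f 0 ≤ 0) {x : E} (hx : x ∈ S)
    {t : ℝ} (ht₀ : 0 ≤ t) (ht₁ : t ≤ 1) : f (t • x) ≤ t * f x := by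
  have h := hf.2 hx h₀ ht₀ (sub_nonneg.2 ht₁) (add_sub_cancel t 1)
  rw [smul_zero, add_zero, smul_eq_mul, smul_eq_mul] at h
  nlinarith

theorem ConvexOn.map_mul_div_le {Ψ : ℝ → ℝ} (hΨ : ConvexOn ℝ (Set.Ici 0) Ψ) (hΨ₀ : Ψ 0 ≤ 0)
    {x M s : ℝ} (hx : 0 ≤ x) (hxM : x ≤ M) (hs : 0 ≤ s) : Ψ (x * s / M) ≤ x / M * Ψ s := by
  rw [mul_div_right_comm, ← smul_eq_mul]
  exact hΨ.map_smul_le_mul Set.self_mem_Ici hΨ₀ hs (div_nonneg hx (hx.trans hxM))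
    (div_le_one_of_le₀ hxM (hx.trans hxM))

section Lintegral

variable {α E : Type*} [MeasurableSpace α] {μ : Measure α} [NormedAddCommGroup E]

theorem lintegral_ofReal_norm_div_integral_norm_le_one (f : α → E) :
    ∫⁻ a, ENNReal.ofReal (‖f a‖ / ∫ a, ‖f a‖ ∂μ) ∂μ ≤ 1 := by
  set L := ∫ a, ‖f a‖ ∂μ
  rcases eq_or_ne L 0 with hL | hL
  · simp [hL]
  have hfi : Integrable (fun a => ‖f a‖) μ := .of_integral_ne_zero hL
  rw [← ofReal_integral_eq_lintegral_ofReal (hfi.div_const L)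
    (ae_of_all _ fun a => div_nonneg (norm_nonneg _) (integral_nonneg fun _ => norm_nonneg _)),
    integral_div, div_self hL, ENNReal.ofReal_one]

theorem lintegral_ofReal_comp_norm_mul_div_le_one {f : α → E} {Ψ : ℝ → ℝ} {M s : ℝ}
    (hΨ : ConvexOn ℝ (Set.Ici 0) Ψ) (hΨ₀ : Ψ 0 ≤ 0) (hs : 0 ≤ s)
    (hfM : ∀ᵐ a ∂μ, ‖f a‖ ≤ M) (hΨs : Ψ s ≤ M / ∫ a, ‖f a‖ ∂μ) :
    ∫⁻ a, ENNReal.ofReal (Ψ (‖f a‖ * s / M)) ∂μ ≤ 1 := by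
  set L := ∫ a, ‖f a‖ ∂μ
  refine le_trans (lintegral_mono_ae ?_) (lintegral_ofReal_norm_div_integral_norm_le_one f)
  filter_upwards [hfM] with a ha
  refine ENNReal.ofReal_le_ofReal ?_
  have hM : 0 ≤ M := (norm_nonneg _).trans ha
  calc Ψ (‖f a‖ * s / M) ≤ ‖f a‖ / M * Ψ s := hΨ.map_mul_div_le hΨ₀ (norm_nonneg _) ha hs
    _ ≤ ‖f a‖ / M * (M / L) := mul_le_mul_of_nonneg_left hΨs (div_nonneg (norm_nonneg _) hM)
    _ ≤ ‖f a‖ / L := by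
      rcases hM.eq_or_lt with rfl | hM
      · simpa using div_nonneg (norm_nonneg _) (integral_nonneg fun _ => norm_nonneg _)
      · rw [div_mul_div_cancel₀ hM.ne']

end Lintegral

theorem luxNorm_le_ofReal {α : Type*} [MeasurableSpace α] {Ψ : ℝ → ℝ} {μ : Measure α}
    {f : α → ℂ} {c : ℝ} (hc : 0 < c) (h : ∫⁻ a, ENNReal.ofReal (Ψ (‖f a‖ / c)) ∂μ ≤ 1) :
    luxNorm Ψ μ f ≤ ENNReal.ofReal c :=
  sInf_le ⟨c, hc, rfl, h⟩

theorem stmt_0_general {Ω : Type*} [MeasurableSpace Ω] (P : Measure Ω) [IsProbabilityMeasure P]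
    (Ψ Ψinv : ℝ → ℝ)
    (hΨ0 : Ψ 0 = 0)
    (hΨconv : StrictConvexOn ℝ (Set.Ici 0) Ψ)
    (hΨinv2 : ∀ y, 0 ≤ y → Ψ (Ψinv y) = y)
    (hΨinv0 : ∀ y, 0 ≤ y → 0 ≤ Ψinv y)
    (g : Ω → ℂ) (hg : MemLp g ⊤ P) (hgne : ¬ (g =ᵐ[P] 0)) :
    luxNorm Ψ P g ≤ ENNReal.ofReal
        ((eLpNorm g ⊤ P).toReal /
          Ψinv ((eLpNorm g ⊤ P).toReal / ∫ ω, ‖g ω‖ ∂P)) ∧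
    ∫⁻ ω, ENNReal.ofReal
        (Ψ (‖g ω‖ *
            Ψinv ((eLpNorm g ⊤ P).toReal / ∫ ω, ‖g ω‖ ∂P) /
            (eLpNorm g ⊤ P).toReal)) ∂P ≤ 1 := by
  rw [toReal_eLpNorm hg.aestronglyMeasurable]
  have hL : 0 < ∫ ω, ‖g ω‖ ∂P := by
    rw [← lpNorm_one_eq_integral_norm hg.aestronglyMeasurable]
    exact lpNorm_nonneg.lt_of_ne'
      ((lpNorm_eq_zero (hg.mono_exponent le_top) one_ne_zero).not.mpr hgne)
  set M := lpNorm g ⊤ P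
  set L := ∫ ω, ‖g ω‖ ∂P
  have hM : 0 < M := lpNorm_nonneg.lt_of_ne' ((lpNorm_eq_zero hg ENNReal.top_ne_zero).not.mpr hgne)
  have hML : 0 < M / L := div_pos hM hL
  set s := Ψinv (M / L)
  have hΨs : Ψ s = M / L := hΨinv2 _ hML.le
  have hs : 0 < s := by
    refine (hΨinv0 _ hML.le).lt_of_ne' fun hs₀ => hML.ne' ?_
    rw [← hΨs, show s = 0 from hs₀, hΨ0]
  have key := lintegral_ofReal_comp_norm_mul_div_le_one hΨconv.convexOn hΨ0.le hs.le
    (ae_le_lpNorm_exponent_top hg) hΨs.le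
  exact ⟨luxNorm_le_ofReal (div_pos hM hs) (by simpa only [div_div_eq_mul_div] using key), key⟩

theorem stmt_0 {Ω : Type*} [MeasurableSpace Ω] (P : Measure Ω) [IsProbabilityMeasure P]
    (Ψ Ψinv : ℝ → ℝ)
    (hΨ0 : Ψ 0 = 0)
    (hΨmono : StrictMonoOn Ψ (Set.Ici 0))
    (hΨconv : StrictConvexOn ℝ (Set.Ici 0) Ψ)
    (hΨcont : ContinuousOn Ψ (Set.Ici 0))
    (hΨlim : Filter.Tendsto (fun x => Ψ x / x) Filter.atTop Filter.atTop)
    (hΨinv1 : ∀ x, 0 ≤ x → Ψinv (Ψ x) = x)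
    (hΨinv2 : ∀ y, 0 ≤ y → Ψ (Ψinv y) = y)
    (hΨinv0 : ∀ y, 0 ≤ y → 0 ≤ Ψinv y)
    (g : Ω → ℂ) (hg : MemLp g ⊤ P) (hgne : ¬ (g =ᵐ[P] 0)) :
    luxNorm Ψ P g ≤ ENNReal.ofReal
        ((eLpNorm g ⊤ P).toReal /
          Ψinv ((eLpNorm g ⊤ P).toReal / ∫ ω, ‖g ω‖ ∂P)) ∧
    ∫⁻ ω, ENNReal.ofReal
        (Ψ (‖g ω‖ *
            Ψinv ((eLpNorm g ⊤ P).toReal / ∫ ω, ‖g ω‖ ∂P) /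
            (eLpNorm g ⊤ P).toReal)) ∂P ≤ 1 :=
  stmt_0_general P Ψ Ψinv hΨ0 hΨconv hΨinv2 hΨinv0 g hg hgne
end

section
/- For every Orlicz function Ψ, every a ∈ 𝕋 and every 0 ≤ r < 1, the restriction of u_{a,r} to 𝕋 satisfies ∫_𝕋 |u_{a,r}| dm = (1−r)/(1+r), and its Luxemburg norm in L^Ψ(𝕋,m) satisfies ‖u_{a,r}‖_Ψ ≤ 1/Ψ⁻¹((1+r)/(1−r)); in particular ‖u_{a,r}‖_Ψ ≤ 1/Ψ⁻¹(1/(1−r)). -/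
/-!
On the unit circle `‖1 - conj a * r * z‖ = ‖z - a * r‖`, so `‖u_{a,r}‖` is `(1 - r) / (1 + r)`
times the Poisson kernel of the point `a * r`, whose circle average is `1`; this is the integral.
Moreover `‖u_{a,r}‖ ≤ 1` on the circle, and convexity together with `Ψ 0 = 0` gives
`Ψ (t * x) ≤ t * Ψ x` for `t ∈ [0, 1]`. Hence `∫ Ψ (‖u_{a,r}‖ * Ψ⁻¹ s) ≤ s * ∫ ‖u_{a,r}‖`, which is
at most `1` for `s = (1 + r) / (1 - r)` and a fortiori for `s = 1 / (1 - r)`.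
-/

open MeasureTheory

/-- The normalized Lebesgue (Haar) measure on the unit circle `𝕋 ⊆ ℂ`,
realized as a measure on `ℂ` carried by the circle. -/
noncomputable def circleMeasure : Measure ℂ :=
  (ENNReal.ofReal (2 * Real.pi))⁻¹ •
    (Measure.map (fun t : ℝ => Complex.exp (t * Complex.I))
      (volume.restrict (Set.Ioc 0 (2 * Real.pi))))

/-- The function `u_{a,r}(z) = ((1-r)/(1 - conj(a)·r·z))²`. -/
noncomputable def uar (a : ℂ) (r : ℝ) (z : ℂ) : ℂ :=
  (((1 : ℂ) - (r : ℂ)) / (1 - (starRingEnd ℂ) a * (r : ℂ) * z)) ^ 2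

open Complex Metric Set

theorem ConvexOn.map_mul_le_mul_of_map_zero {Ψ : ℝ → ℝ} (hΨ : ConvexOn ℝ (Ici 0) Ψ)
    (hΨ0 : Ψ 0 = 0) {t x : ℝ} (ht0 : 0 ≤ t) (ht1 : t ≤ 1) (hx : 0 ≤ x) :
    Ψ (t * x) ≤ t * Ψ x := by
  simpa [hΨ0] using hΨ.2 (mem_Ici.2 hx) (mem_Ici.2 le_rfl) ht0 (sub_nonneg.2 ht1)
    (add_sub_cancel t 1)

theorem luxNorm_le_one_div_of_norm_le_one {α : Type*} [MeasurableSpace α] {Ψ : ℝ → ℝ}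
    {μ : Measure α} {f : α → ℂ} (hΨ : ConvexOn ℝ (Ici 0) Ψ) (hΨ0 : Ψ 0 = 0)
    (hf : Integrable f μ) (hf1 : ∀ᵐ z ∂μ, ‖f z‖ ≤ 1) {x : ℝ} (hx : 0 < x)
    (hfx : Ψ x * ∫ z, ‖f z‖ ∂μ ≤ 1) :
    luxNorm Ψ μ f ≤ ENNReal.ofReal (1 / x) := by
  refine sInf_le ⟨1 / x, by positivity, rfl, ?_⟩
  calc ∫⁻ z, ENNReal.ofReal (Ψ (‖f z‖ / (1 / x))) ∂μ
      ≤ ∫⁻ z, ENNReal.ofReal (‖f z‖) * ENNReal.ofReal (Ψ x) ∂μ := by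
        refine lintegral_mono_ae (hf1.mono fun z hz => ?_)
        rw [div_div_eq_mul_div, div_one, ← ENNReal.ofReal_mul (norm_nonneg _)]
        exact ENNReal.ofReal_le_ofReal
          (hΨ.map_mul_le_mul_of_map_zero hΨ0 (norm_nonneg _) hz hx.le)
    _ = ENNReal.ofReal (Ψ x * ∫ z, ‖f z‖ ∂μ) := by
        rw [lintegral_mul_const' _ _ ENNReal.ofReal_ne_top,
          ← ofReal_integral_eq_lintegral_ofReal hf.norm (.of_forall fun z => norm_nonneg _),
          mul_comm, ENNReal.ofReal_mul' (integral_nonneg fun z => norm_nonneg _)]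
    _ ≤ 1 := ENNReal.ofReal_le_one.2 hfx

theorem circleAverage_poissonKernel {c w : ℂ} {R : ℝ} (hw : w ∈ ball c R) :
    Real.circleAverage (poissonKernel c w) c R = 1 := by
  have h := InnerProductSpace.HarmonicOnNhd.circleAverage_poissonKernel_smul
    (InnerProductSpace.harmonicOnNhd_const (1 : ℝ) (s := closedBall c R)) hw
  rwa [smul_eq_mul, Pi.one_def.symm, mul_one] at h

theorem circleMeasure_eq_map_circleMap :
    circleMeasure = (ENNReal.ofReal (2 * Real.pi))⁻¹ •
      Measure.map (circleMap 0 1) (volume.restrict (Ioc 0 (2 * Real.pi))) := by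
  rw [circleMeasure]
  congr 2
  funext t
  simp [circleMap]

instance isProbabilityMeasure_circleMeasure : IsProbabilityMeasure circleMeasure := by
  constructor
  rw [circleMeasure_eq_map_circleMap, Measure.smul_apply, Measure.map_apply (by fun_prop) .univ,
    preimage_univ, Measure.restrict_apply_univ, Real.volume_Ioc, sub_zero, smul_eq_mul]
  exact ENNReal.inv_mul_cancel (by simp [Real.pi_pos]) ENNReal.ofReal_ne_top

theorem ae_norm_eq_one_circleMeasure : ∀ᵐ z ∂circleMeasure, ‖z‖ = 1 := by
  rw [circleMeasure_eq_map_circleMap]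
  refine Measure.ae_smul_measure_le _ ((ae_map_iff (by fun_prop) ?_).2 (.of_forall fun t => ?_))
  · exact measurableSet_eq_fun (by fun_prop) (by fun_prop)
  · simp [circleMap]

theorem integral_circleMeasure {E : Type*} [NormedAddCommGroup E] [NormedSpace ℝ E]
    {f : ℂ → E} (hf : StronglyMeasurable f) :
    ∫ z, f z ∂circleMeasure = Real.circleAverage f 0 1 := by
  rw [circleMeasure_eq_map_circleMap, integral_smul_measure,
    integral_map (by fun_prop) hf.aestronglyMeasurable,
    ← intervalIntegral.integral_of_le Real.two_pi_pos.le, Real.circleAverage_def,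
    ENNReal.toReal_inv, ENNReal.toReal_ofReal Real.two_pi_pos.le]

theorem measurable_uar (a : ℂ) (r : ℝ) : Measurable (uar a r) := by
  unfold uar; fun_prop

theorem norm_uar (a : ℂ) (r : ℝ) (z : ℂ) :
    ‖uar a r z‖ = (1 - r) ^ 2 / ‖1 - (starRingEnd ℂ) a * r * z‖ ^ 2 := by
  rw [uar, norm_pow, norm_div, div_pow, ← ofReal_one, ← ofReal_sub, norm_real, Real.norm_eq_abs,
    sq_abs]

theorem norm_uar_le_one {a z : ℂ} {r : ℝ} (ha : ‖a‖ ≤ 1) (hr0 : 0 ≤ r) (hr1 : r ≤ 1)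
    (hz : ‖z‖ ≤ 1) : ‖uar a r z‖ ≤ 1 := by
  have hcz : ‖(starRingEnd ℂ) a * r * z‖ ≤ r := by
    rw [norm_mul, norm_mul, Complex.norm_conj, norm_real, Real.norm_of_nonneg hr0]
    calc ‖a‖ * r * ‖z‖ ≤ 1 * r * 1 := by gcongr
      _ = r := by ring
  have hden : 1 - r ≤ ‖1 - (starRingEnd ℂ) a * r * z‖ := by
    have := norm_sub_norm_le (1 : ℂ) ((starRingEnd ℂ) a * r * z)
    rw [norm_one] at this
    linarith
  rw [norm_uar]
  exact div_le_one_of_le₀ (pow_le_pow_left₀ (by linarith) hden 2) (by positivity)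

theorem norm_one_sub_conj_mul_eq_norm_sub {c z : ℂ} (hz : ‖z‖ = 1) :
    ‖1 - (starRingEnd ℂ) c * z‖ = ‖z - c‖ := by
  have hzz : (starRingEnd ℂ) z * z = 1 := by
    rw [mul_comm, mul_conj, normSq_eq_norm_sq, hz]; norm_num
  calc ‖1 - (starRingEnd ℂ) c * z‖ = ‖(starRingEnd ℂ) (z - c) * z‖ := by
        rw [map_sub, sub_mul, hzz]
    _ = ‖z - c‖ := by rw [norm_mul, Complex.norm_conj, hz, mul_one]

theorem norm_uar_eq_poissonKernel {a z : ℂ} {r : ℝ} (ha : ‖a‖ = 1) (hr : 1 + r ≠ 0)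
    (hz : ‖z‖ = 1) : ‖uar a r z‖ = (1 - r) / (1 + r) * poissonKernel 0 (a * r) z := by
  have hden : ‖1 - (starRingEnd ℂ) a * r * z‖ = ‖z - a * r‖ := by
    simpa using norm_one_sub_conj_mul_eq_norm_sub (c := a * r) hz
  rw [norm_uar, hden, poissonKernel_def]
  simp only [sub_zero, norm_mul, norm_real, Real.norm_eq_abs, mul_pow, sq_abs, ha, hz]
  field_simp
  ring

theorem integral_norm_uar {a : ℂ} {r : ℝ} (ha : ‖a‖ = 1) (hr : |r| < 1) :
    ∫ z, ‖uar a r z‖ ∂circleMeasure = (1 - r) / (1 + r) := by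
  have hr1 : 1 + r ≠ 0 := by linarith [neg_abs_le r]
  have hw : a * r ∈ ball (0 : ℂ) 1 := by simpa [ha] using hr
  rw [integral_circleMeasure (measurable_uar a r).norm.stronglyMeasurable,
    Real.circleAverage_congr_sphere (f₂ := fun z => (1 - r) / (1 + r) * poissonKernel 0 (a * r) z)
      fun z hz => norm_uar_eq_poissonKernel ha hr1 (by simpa using hz)]
  exact Real.circleAverage_fun_smul.trans
    (by rw [circleAverage_poissonKernel hw, smul_eq_mul, mul_one])

theorem ae_norm_uar_le_one {a : ℂ} {r : ℝ} (ha : ‖a‖ ≤ 1) (hr0 : 0 ≤ r) (hr1 : r ≤ 1) :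
    ∀ᵐ z ∂circleMeasure, ‖uar a r z‖ ≤ 1 :=
  ae_norm_eq_one_circleMeasure.mono fun _ hz => norm_uar_le_one ha hr0 hr1 hz.le

theorem integrable_uar {a : ℂ} {r : ℝ} (ha : ‖a‖ ≤ 1) (hr0 : 0 ≤ r) (hr1 : r ≤ 1) :
    Integrable (uar a r) circleMeasure :=
  .of_bound (measurable_uar a r).aestronglyMeasurable 1 (ae_norm_uar_le_one ha hr0 hr1)

theorem stmt_1_general
    (Ψ Ψinv : ℝ → ℝ)
    (hΨ0 : Ψ 0 = 0)
    (hΨconv : StrictConvexOn ℝ (Set.Ici 0) Ψ)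
    (hΨinv2 : ∀ y, 0 ≤ y → Ψ (Ψinv y) = y)
    (hΨinv0 : ∀ y, 0 ≤ y → 0 ≤ Ψinv y)
    (a : ℂ) (ha : ‖a‖ = 1) (r : ℝ) (hr0 : 0 ≤ r) (hr1 : r < 1) :
    (∫ z, ‖uar a r z‖ ∂circleMeasure) = (1 - r) / (1 + r) ∧
    luxNorm Ψ circleMeasure (uar a r) ≤ ENNReal.ofReal (1 / Ψinv ((1 + r) / (1 - r))) ∧
    luxNorm Ψ circleMeasure (uar a r) ≤ ENNReal.ofReal (1 / Ψinv (1 / (1 - r))) := by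
  have hint := integral_norm_uar ha (abs_lt.2 ⟨by linarith, hr1⟩)
  have hlux : ∀ y, 0 < y → y * ((1 - r) / (1 + r)) ≤ 1 →
      luxNorm Ψ circleMeasure (uar a r) ≤ ENNReal.ofReal (1 / Ψinv y) := by
    intro y hy hy1
    have hΨinv_pos : 0 < Ψinv y := (hΨinv0 y hy.le).lt_of_ne fun h =>
      hy.ne' (by rw [← hΨinv2 y hy.le, ← h, hΨ0])
    refine luxNorm_le_one_div_of_norm_le_one hΨconv.convexOn hΨ0 (integrable_uar ha.le hr0 hr1.le)
      (ae_norm_uar_le_one ha.le hr0 hr1.le) hΨinv_pos ?_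
    rwa [hΨinv2 y hy.le, hint]
  have h1r : 0 < 1 - r := by linarith
  refine ⟨hint, hlux _ (by positivity) ?_, hlux _ (by positivity) ?_⟩
  · rw [div_mul_div_comm, mul_comm, div_self (by positivity)]
  · rw [div_mul_div_comm, one_mul, mul_comm, div_le_one (by positivity)]
    nlinarith

theorem stmt_1
    (Ψ Ψinv : ℝ → ℝ)
    (hΨ0 : Ψ 0 = 0)
    (hΨmono : StrictMonoOn Ψ (Set.Ici 0))
    (hΨconv : StrictConvexOn ℝ (Set.Ici 0) Ψ)
    (hΨcont : ContinuousOn Ψ (Set.Ici 0))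
    (hΨlim : Filter.Tendsto (fun x => Ψ x / x) Filter.atTop Filter.atTop)
    (hΨinv1 : ∀ x, 0 ≤ x → Ψinv (Ψ x) = x)
    (hΨinv2 : ∀ y, 0 ≤ y → Ψ (Ψinv y) = y)
    (hΨinv0 : ∀ y, 0 ≤ y → 0 ≤ Ψinv y)
    (a : ℂ) (ha : ‖a‖ = 1) (r : ℝ) (hr0 : 0 ≤ r) (hr1 : r < 1) :
    (∫ z, ‖uar a r z‖ ∂circleMeasure) = (1 - r) / (1 + r) ∧
    luxNorm Ψ circleMeasure (uar a r) ≤ ENNReal.ofReal (1 / Ψinv ((1 + r) / (1 - r))) ∧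
    luxNorm Ψ circleMeasure (uar a r) ≤ ENNReal.ofReal (1 / Ψinv (1 / (1 - r))) :=
  stmt_1_general Ψ Ψinv hΨ0 hΨconv hΨinv2 hΨinv0 a ha r hr0 hr1
end

section
/- Let φ : 𝕋 → ℂ be a measurable function with |φ(w)| ≤ 1 for all w ∈ 𝕋. Then for every r ∈ (0,1) there exists a ∈ 𝕋 such that m({w ∈ 𝕋 : |1 − conj(a)·r·φ(w)| < 3(1−r)}) ≥ ((1−r)/8) · m({w ∈ 𝕋 : |φ(w)| > r}). -/
/-!
Cover the possible arguments of `φ w` by at most `8 / (1 - r)` arcs of length `1 - r`. If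
`r < ‖φ w‖ ≤ 1` and `arg (φ w)` lies within `(1 - r) / 2` of `θ`, then
`‖1 - e^{-iθ} r φ w‖ ≤ (1 - r²) + (1 - r) / 2 < 3 (1 - r)`. Hence the sets attached to
`a = e^{iθ}` cover `{r < ‖φ‖}` almost everywhere on the circle, and by pigeonhole one of them
has measure at least `(1 - r) / 8 · m {r < ‖φ‖}`.
-/

open MeasureTheory

open Complex

lemma circleMeasure_ae_norm_eq_one : ∀ᵐ w ∂circleMeasure, ‖w‖ = 1 := by
  have hexp : Measurable fun t : ℝ => exp (t * I) := by fun_prop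
  have hcircle : MeasurableSet {w : ℂ | ‖w‖ = 1} :=
    measurableSet_eq_fun (by fun_prop) (by fun_prop)
  refine Measure.ae_smul_measure ((ae_map_iff hexp.aemeasurable hcircle).2 ?_) _
  exact Filter.Eventually.of_forall norm_exp_ofReal_mul_I

lemma exists_finset_card_mul_le_forall_abs_sub_le {a b ε : ℝ} (hab : a ≤ b) (hε : 0 < ε) :
    ∃ Θ : Finset ℝ, Θ.card * ε ≤ b - a + ε ∧
      ∀ x ∈ Set.Icc a b, ∃ θ ∈ Θ, |x - θ| ≤ ε / 2 := by
  set N := ⌊(b - a) / ε⌋₊ + 1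
  refine ⟨(Finset.range N).image fun k : ℕ => a + (k + 1 / 2) * ε, ?_, ?_⟩
  · calc ((Finset.range N).image fun k : ℕ => a + (k + 1 / 2) * ε).card * ε
        ≤ N * ε := by
          gcongr; exact_mod_cast Finset.card_image_le.trans (Finset.card_range N).le
      _ ≤ ((b - a) / ε + 1) * ε := by
          unfold N; push_cast; gcongr; exact Nat.floor_le (div_nonneg (by linarith) hε.le)
      _ = b - a + ε := by field_simp
  · rintro x ⟨hax, hxb⟩
    set k := ⌊(x - a) / ε⌋₊
    have hkN : k < N := Nat.lt_succ_of_le (Nat.floor_mono (by gcongr))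
    have hk_le : (k : ℝ) ≤ (x - a) / ε := Nat.floor_le (div_nonneg (by linarith) hε.le)
    have hk_lt : (x - a) / ε < k + 1 := Nat.lt_floor_add_one _
    rw [le_div_iff₀ hε] at hk_le
    rw [div_lt_iff₀ hε] at hk_lt
    refine ⟨a + (k + 1 / 2) * ε, Finset.mem_image_of_mem _ (Finset.mem_range.2 hkN), ?_⟩
    rw [abs_le]
    constructor <;> linarith

lemma exists_mul_measure_le_of_ae_le_biUnion {α ι : Type*} [MeasurableSpace α] {μ : Measure α}
    {s : Finset ι} (hs : s.Nonempty) {E : Set α} {T : ι → Set α} (hE : E ≤ᵐ[μ] ⋃ i ∈ s, T i)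
    {c : ENNReal} (hc : s.card * c ≤ 1) : ∃ i ∈ s, c * μ E ≤ μ (T i) := by
  refine ENNReal.exists_le_of_sum_le hs ?_
  calc ∑ _ ∈ s, c * μ E = s.card * c * μ E := by
        rw [Finset.sum_const, nsmul_eq_mul, mul_assoc]
    _ ≤ 1 * μ E := by gcongr
    _ = μ E := one_mul _
    _ ≤ μ (⋃ i ∈ s, T i) := measure_mono_ae hE
    _ ≤ ∑ i ∈ s, μ (T i) := measure_biUnion_finset_le s T

lemma norm_one_sub_ofReal_mul_exp_le {s : ℝ} (hs0 : 0 ≤ s) (hs1 : s ≤ 1) (δ : ℝ) :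
    ‖1 - s * exp (I * δ)‖ ≤ (1 - s) + |δ| := by
  calc ‖1 - s * exp (I * δ)‖ = ‖((1 - s : ℝ) : ℂ) - s * (exp (I * δ) - 1)‖ := by
        congr 1; push_cast; ring
    _ ≤ ‖((1 - s : ℝ) : ℂ)‖ + ‖(s : ℂ) * (exp (I * δ) - 1)‖ := norm_sub_le _ _
    _ ≤ (1 - s) + 1 * |δ| := by
        rw [norm_mul, Complex.norm_real, Complex.norm_real, Real.norm_of_nonneg (by linarith),
          Real.norm_of_nonneg hs0]
        gcongr
        exact Real.norm_exp_I_mul_ofReal_sub_one_le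
    _ = (1 - s) + |δ| := by rw [one_mul]

lemma starRingEnd_exp_mul_eq (θ : ℝ) (z : ℂ) :
    starRingEnd ℂ (exp (θ * I)) * z = ‖z‖ * exp (I * (arg z - θ : ℝ)) := by
  conv_lhs => rw [← norm_mul_exp_arg_mul_I z, ← exp_conj]
  rw [map_mul, conj_ofReal, conj_I, mul_left_comm, ← Complex.exp_add]
  push_cast
  ring_nf

lemma norm_one_sub_starRingEnd_exp_mul_lt {r θ : ℝ} {z : ℂ} (hr0 : 0 < r) (hr1 : r < 1)
    (hrz : r ≤ ‖z‖) (hz1 : ‖z‖ ≤ 1) (hθ : |arg z - θ| ≤ (1 - r) / 2) :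
    ‖1 - starRingEnd ℂ (exp (θ * I)) * r * z‖ < 3 * (1 - r) := by
  have hs0 : 0 ≤ r * ‖z‖ := by positivity
  have hs1 : r * ‖z‖ ≤ 1 := by nlinarith
  have hs : r * r ≤ r * ‖z‖ := by gcongr
  calc ‖1 - starRingEnd ℂ (exp (θ * I)) * r * z‖
        = ‖1 - (r * ‖z‖ : ℝ) * exp (I * (arg z - θ : ℝ))‖ := by
        rw [mul_right_comm, starRingEnd_exp_mul_eq]; push_cast; ring_nf
    _ ≤ (1 - r * ‖z‖) + |arg z - θ| := norm_one_sub_ofReal_mul_exp_le hs0 hs1 _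
    _ < 3 * (1 - r) := by nlinarith

theorem stmt_6_general
    (φ : ℂ → ℂ)
    (hφbd : ∀ w : ℂ, ‖w‖ = 1 → ‖φ w‖ ≤ 1)
    (r : ℝ) (hr0 : 0 < r) (hr1 : r < 1) :
    ∃ a : ℂ, ‖a‖ = 1 ∧
      ENNReal.ofReal ((1 - r) / 8) * circleMeasure {w : ℂ | r < ‖φ w‖}
        ≤ circleMeasure
            {w : ℂ | ‖1 - (starRingEnd ℂ) a * (r : ℂ) * φ w‖ < 3 * (1 - r)} := by
  obtain ⟨Θ, hΘcard, hΘcover⟩ := exists_finset_card_mul_le_forall_abs_sub_le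
    (neg_le_self Real.pi_pos.le) (sub_pos.2 hr1)
  have hΘ : Θ.Nonempty := by
    obtain ⟨θ, hθ, -⟩ := hΘcover 0 ⟨by linarith [Real.pi_pos], Real.pi_pos.le⟩
    exact ⟨θ, hθ⟩
  have hcover : {w : ℂ | r < ‖φ w‖} ≤ᵐ[circleMeasure] ⋃ θ ∈ Θ,
      {w : ℂ | ‖1 - starRingEnd ℂ (exp (θ * I)) * r * φ w‖ < 3 * (1 - r)} := by
    filter_upwards [circleMeasure_ae_norm_eq_one] with w hw hwr
    obtain ⟨θ, hθ, hθw⟩ := hΘcover (arg (φ w)) ⟨(neg_pi_lt_arg _).le, arg_le_pi _⟩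
    exact Set.mem_biUnion hθ
      (norm_one_sub_starRingEnd_exp_mul_lt hr0 hr1 hwr.le (hφbd w hw) hθw)
  have hcard : (Θ.card : ENNReal) * ENNReal.ofReal ((1 - r) / 8) ≤ 1 := by
    rw [← ENNReal.ofReal_natCast, ← ENNReal.ofReal_mul (Nat.cast_nonneg _)]
    refine ENNReal.ofReal_le_one.2 ?_
    nlinarith [hΘcard, Real.pi_lt_d2]
  obtain ⟨θ, -, hθ⟩ := exists_mul_measure_le_of_ae_le_biUnion hΘ hcover hcard
  exact ⟨exp (θ * I), norm_exp_ofReal_mul_I θ, hθ⟩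

theorem stmt_6
    (φ : ℂ → ℂ) (hφmeas : Measurable φ)
    (hφbd : ∀ w : ℂ, ‖w‖ = 1 → ‖φ w‖ ≤ 1)
    (r : ℝ) (hr0 : 0 < r) (hr1 : r < 1) :
    ∃ a : ℂ, ‖a‖ = 1 ∧
      ENNReal.ofReal ((1 - r) / 8) * circleMeasure {w : ℂ | r < ‖φ w‖}
        ≤ circleMeasure
            {w : ℂ | ‖1 - (starRingEnd ℂ) a * (r : ℂ) * φ w‖ < 3 * (1 - r)} :=
  stmt_6_general φ hφbd r hr0 hr1
end

section
/- Let Ψ be an Orlicz function. The following are equivalent: (i) every Lebesgue-measurable function f : [0,1] → ℂ for which there exists c > 0 with Leb({x ∈ [0,1] : |f(x)| > t}) ≤ 1/Ψ(c·t) for all t > 0 satisfies ∫₀¹ Ψ(|f(x)|/B) dx < ∞ for some B > 0 (that is, the weak Orlicz space L^{Ψ,∞}([0,1]) coincides with L^Ψ([0,1])); (ii) there exists B > 1 such that ∫_{Ψ(1)}^{∞} dx / Ψ(B·Ψ⁻¹(x)) < ∞. -/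
/-!
By the layer-cake formula, `∫ Ψ(|f|/B) = ∫₀^∞ Leb{|f| > B Ψ⁻¹(s)} ds`. Under the weak-type bound
`Leb{|f| > t} ≤ 1/Ψ(ct)` the integrand is at most `1/Ψ(c B Ψ⁻¹(s))`, so (ii) gives (i) with the
scale `B/c`. Conversely `Ψ⁻¹(1/x)` satisfies the weak-type bound with `c = 1` and its distribution
function equals `1/Ψ(t)` once `Ψ(t) ≥ 1`, so its Orlicz integrability at some scale is exactly (ii).
-/

open MeasureTheory Set

namespace StrictMonoOn

variable {Ψ Ψinv : ℝ → ℝ}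

theorem lt_apply_iff_of_rightInvOn (hΨ : StrictMonoOn Ψ (Ici 0))
    (hinv : RightInvOn Ψinv Ψ (Ici 0)) (hmaps : MapsTo Ψinv (Ici 0) (Ici 0)) {s y : ℝ}
    (hs : 0 ≤ s) (hy : 0 ≤ y) : s < Ψ y ↔ Ψinv s < y := by
  conv_lhs => rw [← hinv hs]
  exact hΨ.lt_iff_lt (hmaps hs) hy

theorem apply_lt_iff_of_rightInvOn (hΨ : StrictMonoOn Ψ (Ici 0))
    (hinv : RightInvOn Ψinv Ψ (Ici 0)) (hmaps : MapsTo Ψinv (Ici 0) (Ici 0)) {s y : ℝ}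
    (hs : 0 ≤ s) (hy : 0 ≤ y) : Ψ y < s ↔ y < Ψinv s := by
  conv_lhs => rw [← hinv hs]
  exact hΨ.lt_iff_lt hy (hmaps hs)

theorem monotoneOn_of_rightInvOn (hΨ : StrictMonoOn Ψ (Ici 0))
    (hinv : RightInvOn Ψinv Ψ (Ici 0)) (hmaps : MapsTo Ψinv (Ici 0) (Ici 0)) :
    MonotoneOn Ψinv (Ici 0) := fun a ha b hb hab =>
  (hΨ.le_iff_le (hmaps ha) (hmaps hb)).1 (by rwa [hinv ha, hinv hb])

theorem apply_pos_of_apply_zero (hΨ : StrictMonoOn Ψ (Ici 0)) (hΨ0 : Ψ 0 = 0) {x : ℝ}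
    (hx : 0 < x) : 0 < Ψ x :=
  hΨ0 ▸ hΨ self_mem_Ici hx.le hx

theorem apply_nonneg_of_apply_zero (hΨ : StrictMonoOn Ψ (Ici 0)) (hΨ0 : Ψ 0 = 0) {x : ℝ}
    (hx : 0 ≤ x) : 0 ≤ Ψ x :=
  hΨ0 ▸ hΨ.monotoneOn self_mem_Ici hx hx

end StrictMonoOn

theorem MonotoneOn.measurable_comp_of_nonneg {α : Type*} [MeasurableSpace α] {Ψ : ℝ → ℝ}
    (hΨ : MonotoneOn Ψ (Ici 0)) {g : α → ℝ} (hg : Measurable g) (hg0 : ∀ x, 0 ≤ g x) :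
    Measurable fun x => Ψ (g x) := by
  have hmono : Monotone fun y => Ψ (max y 0) := fun a b hab =>
    hΨ (le_max_right a 0) (le_max_right b 0) (max_le_max_right 0 hab)
  simpa only [Function.comp_def, max_eq_left (hg0 _)] using hmono.measurable.comp hg

section Orlicz

variable {Ψ Ψinv : ℝ → ℝ} {α : Type*} [MeasurableSpace α]

theorem lintegral_ofReal_comp_div_eq (hΨ : StrictMonoOn Ψ (Ici 0)) (hΨ0 : Ψ 0 = 0)
    (hinv : RightInvOn Ψinv Ψ (Ici 0)) (hmaps : MapsTo Ψinv (Ici 0) (Ici 0)) (μ : Measure α)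
    {g : α → ℝ} (hg : Measurable g) (hg0 : ∀ x, 0 ≤ g x) {B : ℝ} (hB : 0 < B) :
    ∫⁻ x, ENNReal.ofReal (Ψ (g x / B)) ∂μ = ∫⁻ s in Ioi 0, μ {x | B * Ψinv s < g x} := by
  have hgB : ∀ x, 0 ≤ g x / B := fun x => div_nonneg (hg0 x) hB.le
  rw [lintegral_eq_lintegral_meas_lt μ
    (ae_of_all _ fun x => hΨ.apply_nonneg_of_apply_zero hΨ0 (hgB x))
    (hΨ.monotoneOn.measurable_comp_of_nonneg (hg.div_const B) hgB).aemeasurable]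
  refine setLIntegral_congr_fun measurableSet_Ioi fun s hs => congrArg μ (Set.ext fun x => ?_)
  change s < Ψ (g x / B) ↔ B * Ψinv s < g x
  rw [hΨ.lt_apply_iff_of_rightInvOn hinv hmaps (le_of_lt hs) (hgB x),
    lt_div_iff₀ hB, mul_comm]

theorem lintegral_ofReal_comp_div_lt_top (hΨ : StrictMonoOn Ψ (Ici 0)) (hΨ0 : Ψ 0 = 0)
    (hinv : RightInvOn Ψinv Ψ (Ici 0)) (hmaps : MapsTo Ψinv (Ici 0) (Ici 0))
    {μ : Measure α} [IsFiniteMeasure μ]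
    {g : α → ℝ} (hg : Measurable g) (hg0 : ∀ x, 0 ≤ g x) {B c : ℝ} (hB : 0 < B) (hc : 0 < c)
    (hdist : ∀ t > 0, μ {x | t < g x} ≤ ENNReal.ofReal (1 / Ψ (c * t)))
    (htail : ∫⁻ s in Ioi (Ψ 1), ENNReal.ofReal (1 / Ψ (B * Ψinv s)) < ⊤) :
    ∫⁻ x, ENNReal.ofReal (Ψ (g x / (B / c))) ∂μ < ⊤ := by
  rw [lintegral_ofReal_comp_div_eq hΨ hΨ0 hinv hmaps μ hg hg0 (div_pos hB hc),
    ← Ioc_union_Ioi_eq_Ioi (hΨ.apply_pos_of_apply_zero hΨ0 one_pos).le,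
    lintegral_union measurableSet_Ioi (Ioc_disjoint_Ioi le_rfl)]
  refine ENNReal.add_lt_top.2 ⟨?_, lt_of_le_of_lt ?_ htail⟩
  · calc _ ≤ ∫⁻ _ in Ioc 0 (Ψ 1), μ univ :=
          setLIntegral_mono' measurableSet_Ioc fun _ _ => measure_mono (subset_univ _)
      _ < ⊤ := by
          rw [setLIntegral_const, Real.volume_Ioc]
          exact ENNReal.mul_lt_top (measure_lt_top _ _) ENNReal.ofReal_lt_top
  · refine setLIntegral_mono' measurableSet_Ioi fun s hs => ?_
    have hs1 : 1 < Ψinv s := (hΨ.apply_lt_iff_of_rightInvOn hinv hmaps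
      ((hΨ.apply_pos_of_apply_zero hΨ0 one_pos).trans hs).le zero_le_one).1 hs
    calc μ {x | B / c * Ψinv s < g x} ≤ ENNReal.ofReal (1 / Ψ (c * (B / c * Ψinv s))) :=
          hdist _ (by positivity)
      _ = ENNReal.ofReal (1 / Ψ (B * Ψinv s)) := by
          rw [← mul_assoc, mul_div_cancel₀ _ hc.ne']

/-- On `(0,1]` this is `Ψ⁻¹(1/x)`, the extremal element of the weak Orlicz space: its distribution
function is `min 1 (1/Ψ(t))`. The truncation at `1` only acts off `(0,1]`. -/
noncomputable def orliczExtremal (Ψinv : ℝ → ℝ) (x : ℝ) : ℝ := Ψinv (max x⁻¹ 1)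

theorem measurable_orliczExtremal (hmono : MonotoneOn Ψinv (Ici 0)) :
    Measurable (orliczExtremal Ψinv) := by
  have hmono' : Monotone fun y => Ψinv (max y 1) := fun a b hab =>
    hmono (zero_le_one.trans (le_max_right a 1)) (zero_le_one.trans (le_max_right b 1))
      (max_le_max_right 1 hab)
  exact hmono'.measurable.comp measurable_inv

theorem orliczExtremal_nonneg (hmaps : MapsTo Ψinv (Ici 0) (Ici 0)) (x : ℝ) :
    0 ≤ orliczExtremal Ψinv x :=
  hmaps (zero_le_one.trans (le_max_right x⁻¹ 1))

theorem restrict_Icc_setOf_lt_orliczExtremal_eq (hΨ : StrictMonoOn Ψ (Ici 0)) (hΨ0 : Ψ 0 = 0)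
    (hinv : RightInvOn Ψinv Ψ (Ici 0)) (hmaps : MapsTo Ψinv (Ici 0) (Ici 0)) {t : ℝ}
    (ht : 0 < t) :
    volume.restrict (Icc (0 : ℝ) 1) {x | t < orliczExtremal Ψinv x}
      = volume (Ioc (0 : ℝ) 1 ∩ Iio (1 / Ψ t)) := by
  rw [Measure.restrict_congr_set Ioc_ae_eq_Icc.symm, Measure.restrict_apply' measurableSet_Ioc,
    inter_comm]
  refine congrArg volume (Set.ext fun x => and_congr_right fun hx => ?_)
  have hx1 : 1 ≤ x⁻¹ := one_le_inv₀ hx.1 |>.2 hx.2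
  change t < Ψinv (max x⁻¹ 1) ↔ x < 1 / Ψ t
  rw [max_eq_left hx1, ← hΨ.apply_lt_iff_of_rightInvOn hinv hmaps (zero_le_one.trans hx1) ht.le,
    one_div, lt_inv_comm₀ hx.1 (hΨ.apply_pos_of_apply_zero hΨ0 ht)]

theorem restrict_Icc_setOf_lt_orliczExtremal_le (hΨ : StrictMonoOn Ψ (Ici 0)) (hΨ0 : Ψ 0 = 0)
    (hinv : RightInvOn Ψinv Ψ (Ici 0)) (hmaps : MapsTo Ψinv (Ici 0) (Ici 0)) {t : ℝ}
    (ht : 0 < t) :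
    volume.restrict (Icc (0 : ℝ) 1) {x | t < orliczExtremal Ψinv x} ≤ ENNReal.ofReal (1 / Ψ t) := by
  rw [restrict_Icc_setOf_lt_orliczExtremal_eq hΨ hΨ0 hinv hmaps ht]
  calc volume (Ioc 0 1 ∩ Iio (1 / Ψ t)) ≤ volume (Ioo 0 (1 / Ψ t)) :=
        measure_mono fun x hx => ⟨hx.1.1, hx.2⟩
    _ = ENNReal.ofReal (1 / Ψ t) := by rw [Real.volume_Ioo, sub_zero]

theorem le_restrict_Icc_setOf_lt_orliczExtremal (hΨ : StrictMonoOn Ψ (Ici 0)) (hΨ0 : Ψ 0 = 0)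
    (hinv : RightInvOn Ψinv Ψ (Ici 0)) (hmaps : MapsTo Ψinv (Ici 0) (Ici 0)) {t : ℝ}
    (ht : 0 < t) (hΨt : 1 ≤ Ψ t) :
    ENNReal.ofReal (1 / Ψ t) ≤ volume.restrict (Icc (0 : ℝ) 1) {x | t < orliczExtremal Ψinv x} := by
  rw [restrict_Icc_setOf_lt_orliczExtremal_eq hΨ hΨ0 hinv hmaps ht]
  have hle : 1 / Ψ t ≤ 1 := div_le_one_of_le₀ hΨt (zero_le_one.trans hΨt)
  calc ENNReal.ofReal (1 / Ψ t) = volume (Ioo 0 (1 / Ψ t)) := by rw [Real.volume_Ioo, sub_zero]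
    _ ≤ volume (Ioc 0 1 ∩ Iio (1 / Ψ t)) :=
        measure_mono fun x hx => ⟨⟨hx.1, hx.2.le.trans hle⟩, hx.2⟩

theorem lintegral_ofReal_comp_div_le_of_le (hΨ : MonotoneOn Ψ (Ici 0)) (μ : Measure α) {g : α → ℝ}
    (hg0 : ∀ x, 0 ≤ g x) {B B' : ℝ} (hB : 0 < B) (hBB' : B ≤ B') :
    ∫⁻ x, ENNReal.ofReal (Ψ (g x / B')) ∂μ ≤ ∫⁻ x, ENNReal.ofReal (Ψ (g x / B)) ∂μ :=
  lintegral_mono fun x => ENNReal.ofReal_le_ofReal <|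
    hΨ (div_nonneg (hg0 x) (hB.trans_le hBB').le) (div_nonneg (hg0 x) hB.le)
      (div_le_div_of_nonneg_left (hg0 x) hB hBB')

theorem exists_tail_lintegral_lt_top_of_orliczExtremal (hΨ : StrictMonoOn Ψ (Ici 0)) (hΨ0 : Ψ 0 = 0)
    (hinv : RightInvOn Ψinv Ψ (Ici 0)) (hmaps : MapsTo Ψinv (Ici 0) (Ici 0))
    (hfin : ∃ B > 0,
      ∫⁻ x in Icc (0 : ℝ) 1, ENNReal.ofReal (Ψ (orliczExtremal Ψinv x / B)) < ⊤) :
    ∃ B > 1, ∫⁻ s in Ioi (Ψ 1), ENNReal.ofReal (1 / Ψ (B * Ψinv s)) < ⊤ := by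
  obtain ⟨B₀, hB₀, hfin⟩ := hfin
  have hinv1 : 0 ≤ Ψinv 1 := hmaps (mem_Ici.2 zero_le_one)
  have hg0 := orliczExtremal_nonneg hmaps
  -- enlarging the scale past `Ψ⁻¹(1)` puts every relevant level `t` in the range `Ψ(t) ≥ 1`
  set B := B₀ + Ψinv 1 + 1
  have hB : 0 < B := by positivity
  have hB₀B : B₀ ≤ B := by linarith
  have hfinB := (lintegral_ofReal_comp_div_le_of_le hΨ.monotoneOn _ hg0 hB₀ hB₀B).trans_lt hfin
  rw [lintegral_ofReal_comp_div_eq hΨ hΨ0 hinv hmaps _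
    (measurable_orliczExtremal (hΨ.monotoneOn_of_rightInvOn hinv hmaps)) hg0 hB] at hfinB
  refine ⟨B, by linarith, lt_of_le_of_lt ?_ hfinB⟩
  calc _ ≤ ∫⁻ s in Ioi (Ψ 1),
        volume.restrict (Icc (0 : ℝ) 1) {x | B * Ψinv s < orliczExtremal Ψinv x} :=
        setLIntegral_mono' measurableSet_Ioi fun s hs => ?_
    _ ≤ _ := lintegral_mono_set (Ioi_subset_Ioi (hΨ.apply_nonneg_of_apply_zero hΨ0 zero_le_one))
  have hs1 : 1 < Ψinv s := (hΨ.apply_lt_iff_of_rightInvOn hinv hmaps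
    ((hΨ.apply_pos_of_apply_zero hΨ0 one_pos).trans hs).le zero_le_one).1 hs
  have ht : Ψinv 1 < B * Ψinv s := by nlinarith
  exact le_restrict_Icc_setOf_lt_orliczExtremal hΨ hΨ0 hinv hmaps (by linarith)
    ((hΨ.lt_apply_iff_of_rightInvOn hinv hmaps zero_le_one (by linarith)).2 ht).le

end Orlicz

theorem stmt_7_general
    (Ψ Ψinv : ℝ → ℝ)
    (hΨ0 : Ψ 0 = 0)
    (hΨmono : StrictMonoOn Ψ (Set.Ici 0))
    (hΨinv2 : ∀ y, 0 ≤ y → Ψ (Ψinv y) = y)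
    (hΨinv0 : ∀ y, 0 ≤ y → 0 ≤ Ψinv y) :
    (∀ f : ℝ → ℂ, Measurable f →
      (∃ c > (0 : ℝ), ∀ t > (0 : ℝ),
        (volume.restrict (Set.Icc (0 : ℝ) 1)) {x : ℝ | t < ‖f x‖}
          ≤ ENNReal.ofReal (1 / Ψ (c * t))) →
      ∃ B > (0 : ℝ),
        (∫⁻ x in Set.Icc (0 : ℝ) 1, ENNReal.ofReal (Ψ (‖f x‖ / B))) < ⊤)
    ↔
    (∃ B > (1 : ℝ),
      (∫⁻ x in Set.Ioi (Ψ 1), ENNReal.ofReal (1 / Ψ (B * Ψinv x))) < ⊤) := by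
  have hinv : RightInvOn Ψinv Ψ (Ici 0) := hΨinv2
  have hmaps : MapsTo Ψinv (Ici 0) (Ici 0) := hΨinv0
  constructor
  · intro H
    have hg0 := orliczExtremal_nonneg hmaps
    obtain ⟨B, hB, hfin⟩ := H (fun x => (orliczExtremal Ψinv x : ℂ))
      (Complex.measurable_ofReal.comp
        (measurable_orliczExtremal (hΨmono.monotoneOn_of_rightInvOn hinv hmaps)))
      ⟨1, one_pos, fun t ht => by
        simpa only [Complex.norm_of_nonneg (hg0 _), one_mul]
          using restrict_Icc_setOf_lt_orliczExtremal_le hΨmono hΨ0 hinv hmaps ht⟩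
    simp only [Complex.norm_of_nonneg (hg0 _)] at hfin
    exact exists_tail_lintegral_lt_top_of_orliczExtremal hΨmono hΨ0 hinv hmaps ⟨B, hB, hfin⟩
  · rintro ⟨B, hB, htail⟩ f hf ⟨c, hc, hdist⟩
    exact ⟨B / c, div_pos (by linarith) hc, lintegral_ofReal_comp_div_lt_top hΨmono hΨ0 hinv
      hmaps hf.norm (fun x => norm_nonneg _) (by linarith) hc hdist htail⟩

theorem stmt_7
    (Ψ Ψinv : ℝ → ℝ)
    (hΨ0 : Ψ 0 = 0)
    (hΨmono : StrictMonoOn Ψ (Set.Ici 0))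
    (hΨconv : StrictConvexOn ℝ (Set.Ici 0) Ψ)
    (hΨcont : ContinuousOn Ψ (Set.Ici 0))
    (hΨlim : Filter.Tendsto (fun x => Ψ x / x) Filter.atTop Filter.atTop)
    (hΨinv1 : ∀ x, 0 ≤ x → Ψinv (Ψ x) = x)
    (hΨinv2 : ∀ y, 0 ≤ y → Ψ (Ψinv y) = y)
    (hΨinv0 : ∀ y, 0 ≤ y → 0 ≤ Ψinv y) :
    (∀ f : ℝ → ℂ, Measurable f →
      (∃ c > (0 : ℝ), ∀ t > (0 : ℝ),
        (volume.restrict (Set.Icc (0 : ℝ) 1)) {x : ℝ | t < ‖f x‖}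
          ≤ ENNReal.ofReal (1 / Ψ (c * t))) →
      ∃ B > (0 : ℝ),
        (∫⁻ x in Set.Icc (0 : ℝ) 1, ENNReal.ofReal (Ψ (‖f x‖ / B))) < ⊤)
    ↔
    (∃ B > (1 : ℝ),
      (∫⁻ x in Set.Ioi (Ψ 1), ENNReal.ofReal (1 / Ψ (B * Ψinv x))) < ⊤) :=
  stmt_7_general Ψ Ψinv hΨ0 hΨmono hΨinv2 hΨinv0
end

section
/- Let Ψ be an Orlicz function satisfying condition Δ¹, and let (Ω,P) be a probability space. Then every measurable f : Ω → ℂ for which there exists c > 0 with P({|f| > t}) ≤ 1/Ψ(c·t) for all t > 0 satisfies ∫_Ω Ψ(|f|/B) dP < ∞ for some B > 0; that is, the weak Orlicz space L^{Ψ,∞}(Ω) coincides with the Orlicz space L^Ψ(Ω). -/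
/-!
With `x₁ = max x₀ 1` and `B = β² / c`, bound `Ψ(‖f‖/B)` pointwise by `Ψ(x₁)` plus
`∑ₙ Ψ(x₁βⁿ⁺¹) · 1{‖f‖/B > x₁βⁿ}`. The weak-type bound gives the `n`-th tail probability at most
`1 / Ψ(x₁βⁿ⁺²)`, and `Δ¹` says `Ψ(x) / Ψ(βx) ≤ 1/x` for large `x`, so the `n`-th term of the
integrated series is at most `1 / (x₁βⁿ⁺¹)`: the series is dominated by a geometric one.
-/

open MeasureTheory Set
open scoped ENNReal

theorem exists_nat_pow_lt_le {x y : ℝ} (hx : 1 < x) (hy : 1 < y) :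
    ∃ n : ℕ, y ^ n < x ∧ x ≤ y ^ (n + 1) := by
  obtain ⟨n, hlt, hle⟩ := exists_mem_Ioc_zpow (zero_lt_one.trans hx) hy
  have hn : 0 ≤ n := by
    by_contra! h
    have : y ^ (n + 1) ≤ 1 := zpow_le_one_of_nonpos₀ hy.le (by omega)
    linarith
  lift n to ℕ using hn
  exact ⟨n, by exact_mod_cast hlt, by exact_mod_cast hle⟩

theorem le_add_tsum_indicator_of_monotoneOn {φ : ℝ → ℝ≥0∞} (hφ : MonotoneOn φ (Ici 0))
    {r β x : ℝ} (hr : 0 < r) (hβ : 1 < β) (hx : 0 ≤ x) :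
    φ x ≤ φ r + ∑' n, {y | r * β ^ n < y}.indicator (fun _ ↦ φ (r * β ^ (n + 1))) x := by
  have hβ0 : 0 < β := zero_lt_one.trans hβ
  rcases le_or_gt x r with hxr | hrx
  · exact (hφ hx hr.le hxr).trans le_self_add
  obtain ⟨n, hlt, hle⟩ := exists_nat_pow_lt_le ((one_lt_div hr).2 hrx) hβ
  rw [lt_div_iff₀ hr, mul_comm] at hlt
  rw [div_le_iff₀ hr, mul_comm] at hle
  calc φ x ≤ φ (r * β ^ (n + 1)) := hφ hx (mem_Ici.2 (by positivity)) hle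
    _ = {y | r * β ^ n < y}.indicator (fun _ ↦ φ (r * β ^ (n + 1))) x :=
      (indicator_of_mem (show x ∈ {y | r * β ^ n < y} from hlt) fun _ ↦ φ (r * β ^ (n + 1))).symm
    _ ≤ ∑' n, {y | r * β ^ n < y}.indicator (fun _ ↦ φ (r * β ^ (n + 1))) x :=
      ENNReal.le_tsum n
    _ ≤ _ := le_add_self

theorem lintegral_comp_le_add_tsum_mul_measure {Ω : Type*} [MeasurableSpace Ω] (μ : Measure Ω)
    {φ : ℝ → ℝ≥0∞} (hφ : MonotoneOn φ (Ici 0)) {g : Ω → ℝ} (hg : Measurable g)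
    (hg0 : ∀ ω, 0 ≤ g ω) {r β : ℝ} (hr : 0 < r) (hβ : 1 < β) :
    ∫⁻ ω, φ (g ω) ∂μ ≤
      φ r * μ univ + ∑' n, φ (r * β ^ (n + 1)) * μ {ω | r * β ^ n < g ω} := by
  have hmeas (n : ℕ) : MeasurableSet {ω | r * β ^ n < g ω} :=
    measurableSet_lt measurable_const hg
  calc ∫⁻ ω, φ (g ω) ∂μ
      ≤ ∫⁻ ω, φ r + ∑' n, {ω | r * β ^ n < g ω}.indicator (fun _ ↦ φ (r * β ^ (n + 1))) ω ∂μ :=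
        lintegral_mono fun ω ↦ le_add_tsum_indicator_of_monotoneOn hφ hr hβ (hg0 ω)
    _ = _ := by
      rw [lintegral_add_left measurable_const, lintegral_const,
        lintegral_tsum fun n ↦ (measurable_const.indicator (hmeas n)).aemeasurable]
      simp only [lintegral_indicator_const (hmeas _)]

theorem ENNReal.ofReal_mul_le_ofReal_one_div {a b x : ℝ} {m : ℝ≥0∞} (hx : 0 < x) (hab : x * a ≤ b)
    (hm : m ≤ ENNReal.ofReal (1 / b)) :
    ENNReal.ofReal a * m ≤ ENNReal.ofReal (1 / x) := by
  rcases le_or_gt a 0 with ha | ha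
  · simp [ENNReal.ofReal_of_nonpos ha]
  have hb : 0 < b := by nlinarith
  calc ENNReal.ofReal a * m ≤ ENNReal.ofReal a * ENNReal.ofReal (1 / b) := by gcongr
    _ = ENNReal.ofReal (a / b) := by rw [← ENNReal.ofReal_mul ha.le, mul_one_div]
    _ ≤ ENNReal.ofReal (1 / x) := by
      refine ENNReal.ofReal_le_ofReal ?_
      rw [div_le_div_iff₀ hb hx]
      linarith

theorem tsum_ofReal_one_div_mul_pow_lt_top {x β : ℝ} (hx : 1 ≤ x) (hβ : 1 < β) :
    ∑' n : ℕ, ENNReal.ofReal (1 / (x * β ^ (n + 1))) < ⊤ := by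
  have hβ0 : 0 < β := zero_lt_one.trans hβ
  calc ∑' n : ℕ, ENNReal.ofReal (1 / (x * β ^ (n + 1)))
      ≤ ∑' n : ℕ, ENNReal.ofReal β⁻¹ ^ n := by
        refine ENNReal.tsum_le_tsum fun n ↦ ?_
        rw [← ENNReal.ofReal_pow (by positivity), inv_pow, ← one_div]
        refine ENNReal.ofReal_le_ofReal (one_div_le_one_div_of_le (by positivity) ?_)
        calc β ^ n ≤ β ^ (n + 1) := pow_le_pow_right₀ hβ.le n.le_succ
          _ ≤ x * β ^ (n + 1) := le_mul_of_one_le_left (by positivity) hx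
    _ < ⊤ := by
      rw [ENNReal.tsum_geometric, ENNReal.inv_lt_top, tsub_pos_iff_lt, ENNReal.ofReal_lt_one]
      exact inv_lt_one_of_one_lt₀ hβ

theorem stmt_8_general {Ω : Type*} [MeasurableSpace Ω] (P : Measure Ω) [IsProbabilityMeasure P]
    (Ψ : ℝ → ℝ)
    (hΨmono : StrictMonoOn Ψ (Set.Ici 0))
    -- condition Δ¹
    (hΔ1 : ∃ β > (1 : ℝ), ∃ x₀ > (0 : ℝ), ∀ x ≥ x₀, x * Ψ x ≤ Ψ (β * x))
    (f : Ω → ℂ) (hf : Measurable f)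
    (hweak : ∃ c > (0 : ℝ), ∀ t > (0 : ℝ),
      P {ω : Ω | t < ‖f ω‖} ≤ ENNReal.ofReal (1 / Ψ (c * t))) :
    ∃ B > (0 : ℝ),
      (∫⁻ ω, ENNReal.ofReal (Ψ (‖f ω‖ / B)) ∂P) < ⊤ := by
  obtain ⟨β, hβ, x₀, -, hΔ⟩ := hΔ1
  obtain ⟨c, hc, hw⟩ := hweak
  have hβ0 : 0 < β := zero_lt_one.trans hβ
  set x₁ := max x₀ 1
  have hx₁ : 1 ≤ x₁ := le_max_right _ _
  set B := β ^ 2 / c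
  have hB : 0 < B := by positivity
  have hφ : MonotoneOn (fun x ↦ ENNReal.ofReal (Ψ (x / B))) (Ici 0) := fun x hx y hy hxy ↦
    ENNReal.ofReal_le_ofReal <| hΨmono.monotoneOn (div_nonneg hx hB.le) (div_nonneg hy hB.le)
      (div_le_div_of_nonneg_right hxy hB.le)
  have hterm (n : ℕ) : ENNReal.ofReal (Ψ (B * x₁ * β ^ (n + 1) / B)) *
      P {ω | B * x₁ * β ^ n < ‖f ω‖} ≤ ENNReal.ofReal (1 / (x₁ * β ^ (n + 1))) := by
    have hlevel : c * (B * x₁ * β ^ n) = β * (x₁ * β ^ (n + 1)) := by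
      simp only [B]; field_simp; ring
    rw [mul_assoc, mul_div_cancel_left₀ _ hB.ne']
    refine ENNReal.ofReal_mul_le_ofReal_one_div (by positivity) (hΔ _ ?_) ?_
    · exact (le_max_left _ _).trans (le_mul_of_one_le_right (by positivity) (one_le_pow₀ hβ.le))
    · simpa only [hlevel] using hw (B * x₁ * β ^ n) (by positivity)
  refine ⟨B, hB, lt_of_le_of_lt (lintegral_comp_le_add_tsum_mul_measure P hφ hf.norm
    (fun _ ↦ norm_nonneg _) (by positivity : 0 < B * x₁) hβ) ?_⟩
  exact ENNReal.add_lt_top.2 ⟨ENNReal.mul_lt_top ENNReal.ofReal_lt_top (measure_lt_top _ _),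
    lt_of_le_of_lt (ENNReal.tsum_le_tsum hterm) (tsum_ofReal_one_div_mul_pow_lt_top hx₁ hβ)⟩

theorem stmt_8 {Ω : Type*} [MeasurableSpace Ω] (P : Measure Ω) [IsProbabilityMeasure P]
    (Ψ Ψinv : ℝ → ℝ)
    (hΨ0 : Ψ 0 = 0)
    (hΨmono : StrictMonoOn Ψ (Set.Ici 0))
    (hΨconv : StrictConvexOn ℝ (Set.Ici 0) Ψ)
    (hΨcont : ContinuousOn Ψ (Set.Ici 0))
    (hΨlim : Filter.Tendsto (fun x => Ψ x / x) Filter.atTop Filter.atTop)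
    (hΨinv1 : ∀ x, 0 ≤ x → Ψinv (Ψ x) = x)
    (hΨinv2 : ∀ y, 0 ≤ y → Ψ (Ψinv y) = y)
    (hΨinv0 : ∀ y, 0 ≤ y → 0 ≤ Ψinv y)
    -- condition Δ¹
    (hΔ1 : ∃ β > (1 : ℝ), ∃ x₀ > (0 : ℝ), ∀ x ≥ x₀, x * Ψ x ≤ Ψ (β * x))
    (f : Ω → ℂ) (hf : Measurable f)
    (hweak : ∃ c > (0 : ℝ), ∀ t > (0 : ℝ),
      P {ω : Ω | t < ‖f ω‖} ≤ ENNReal.ofReal (1 / Ψ (c * t))) :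
    ∃ B > (0 : ℝ),
      (∫⁻ ω, ENNReal.ofReal (Ψ (‖f ω‖ / B)) ∂P) < ⊤ :=
  stmt_8_general P Ψ hΨmono hΔ1 f hf hweak
end

section
/- Let Ψ be an Orlicz function and suppose that ∫_{Ψ(1)}^{∞} dx / Ψ(B·Ψ⁻¹(x)) < ∞ for some B > 1. Then Ψ(x)/Ψ(2Bx) → 0 as x → ∞; in particular Ψ satisfies condition Δ⁰. -/
open MeasureTheory Set Filter Topology ENNReal

/-! On `(Ψ t, Ψ (2 t)]`, an interval of length at least `Ψ t` by convexity, we have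
`Ψinv x ≤ 2 t`, so the integrand is at least `1 / Ψ (2 B t)`. Hence `Ψ t / Ψ (2 B t)` is
bounded by the tail of the convergent integral beyond `Ψ t`, which tends to zero since `Ψ t → ∞`. -/

theorem StrictMonoOn.monotoneOn_of_rightInvOn_s9 {α β : Type*} [LinearOrder α] [Preorder β]
    {f : α → β} {g : β → α} {s : Set α} {t : Set β} (hf : StrictMonoOn f s)
    (hg : MapsTo g t s) (hfg : RightInvOn g f t) : MonotoneOn g t :=
  fun _ hy _ hz hyz => (hf.le_iff_le (hg hy) (hg hz)).mp (by rwa [hfg hy, hfg hz])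

theorem StrictMonoOn.pos_of_map_zero {Ψ : ℝ → ℝ} (hΨ : StrictMonoOn Ψ (Ici 0))
    (hΨ0 : Ψ 0 = 0) {x : ℝ} (hx : 0 < x) : 0 < Ψ x :=
  hΨ0 ▸ hΨ self_mem_Ici hx.le hx

namespace ConvexOn

variable {Ψ : ℝ → ℝ}

theorem map_mul_le_mul (hΨ : ConvexOn ℝ (Ici 0) Ψ) (hΨ0 : Ψ 0 = 0) {a x : ℝ}
    (ha₀ : 0 ≤ a) (ha₁ : a ≤ 1) (hx : 0 ≤ x) : Ψ (a * x) ≤ a * Ψ x := by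
  simpa [hΨ0] using
    hΨ.2 (mem_Ici.2 hx) self_mem_Ici ha₀ (sub_nonneg.2 ha₁) (add_sub_cancel a 1)

theorem two_mul_map_le_map_two_mul (hΨ : ConvexOn ℝ (Ici 0) Ψ) (hΨ0 : Ψ 0 = 0) {t : ℝ}
    (ht : 0 ≤ t) : 2 * Ψ t ≤ Ψ (2 * t) := by
  have := hΨ.map_mul_le_mul hΨ0 (a := 2⁻¹) (by norm_num) (by norm_num)
    (by positivity : 0 ≤ 2 * t)
  rw [inv_mul_cancel_left₀ two_ne_zero] at this
  linarith

theorem mul_map_one_le_map (hΨ : ConvexOn ℝ (Ici 0) Ψ) (hΨ0 : Ψ 0 = 0) {t : ℝ}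
    (ht : 1 ≤ t) : t * Ψ 1 ≤ Ψ t := by
  have ht₀ : 0 < t := one_pos.trans_le ht
  have := hΨ.map_mul_le_mul hΨ0 (inv_nonneg.2 ht₀.le) (inv_le_one_of_one_le₀ ht) ht₀.le
  rw [inv_mul_cancel₀ ht₀.ne'] at this
  exact (le_inv_mul_iff₀ ht₀).1 this

theorem tendsto_atTop (hΨ : ConvexOn ℝ (Ici 0) Ψ) (hΨ0 : Ψ 0 = 0) (hΨ1 : 0 < Ψ 1) :
    Tendsto Ψ atTop atTop :=
  tendsto_atTop_mono' _ ((eventually_ge_atTop 1).mono fun _ ht => hΨ.mul_map_one_le_map hΨ0 ht)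
    (tendsto_id.atTop_mul_const hΨ1)

end ConvexOn

theorem tendsto_setLIntegral_Ioi_atTop {μ : Measure ℝ} [SFinite μ] {f : ℝ → ℝ≥0∞} {c : ℝ}
    (hf : ∫⁻ x in Ioi c, f x ∂μ ≠ ∞) :
    Tendsto (fun a => ∫⁻ x in Ioi a, f x ∂μ) atTop (𝓝 0) := by
  set ν := (μ.restrict (Ioi c)).withDensity f
  have : IsFiniteMeasure ν :=
    ⟨by rwa [withDensity_apply' _ univ, Measure.restrict_univ, lt_top_iff_ne_top]⟩
  have hν : Tendsto (fun a => ν (Ioi a)) atTop (𝓝 0) := by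
    have hempty : ⋂ a : ℝ, Ioi a = ∅ := iInter_eq_empty_iff.2 fun x => ⟨x, lt_irrefl x⟩
    simpa only [hempty, measure_empty, Function.comp_def] using
      tendsto_measure_iInter_atTop (μ := ν) (fun a => measurableSet_Ioi.nullMeasurableSet)
        (fun _ _ hab => Ioi_subset_Ioi hab) ⟨0, measure_ne_top ν _⟩
  refine hν.congr' ?_
  filter_upwards [eventually_ge_atTop c] with a ha
  rw [withDensity_apply' _, Measure.restrict_restrict' measurableSet_Ioi,
    inter_eq_left.2 (Ioi_subset_Ioi ha)]

theorem ofReal_div_le_setLIntegral_Ioc {Ψ Ψinv : ℝ → ℝ} {B t : ℝ} (hΨ0 : Ψ 0 = 0)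
    (hΨ : StrictMonoOn Ψ (Ici 0)) (hΨinv : MonotoneOn Ψinv (Ici 0))
    (hΨinvΨ : ∀ x, 0 ≤ x → Ψinv (Ψ x) = x) (hB : 0 < B) (ht : 0 < t)
    (hdouble : 2 * Ψ t ≤ Ψ (2 * t)) :
    ENNReal.ofReal (Ψ t / Ψ (2 * B * t)) ≤
      ∫⁻ x in Ioc (Ψ t) (Ψ (2 * t)), ENNReal.ofReal (1 / Ψ (B * Ψinv x)) := by
  have hΨt : 0 < Ψ t := hΨ.pos_of_map_zero hΨ0 ht
  have hΨ2Bt : 0 < Ψ (2 * B * t) := hΨ.pos_of_map_zero hΨ0 (by positivity)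
  have hbound : ∀ x ∈ Ioc (Ψ t) (Ψ (2 * t)),
      ENNReal.ofReal (1 / Ψ (2 * B * t)) ≤ ENNReal.ofReal (1 / Ψ (B * Ψinv x)) := by
    rintro x ⟨hlo, hhi⟩
    have hx : 0 ≤ x := hΨt.le.trans hlo.le
    have hlo' : t ≤ Ψinv x := hΨinvΨ t ht.le ▸ hΨinv (mem_Ici.2 hΨt.le) hx hlo.le
    have hhi' : Ψinv x ≤ 2 * t :=
      hΨinvΨ (2 * t) (by positivity) ▸ hΨinv hx (mem_Ici.2 (hΨt.le.trans (by linarith))) hhi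
    gcongr
    · exact hΨ.pos_of_map_zero hΨ0 (by nlinarith)
    · exact hΨ.monotoneOn (mem_Ici.2 (by nlinarith)) (mem_Ici.2 (by positivity)) (by nlinarith)
  calc ENNReal.ofReal (Ψ t / Ψ (2 * B * t))
      ≤ ENNReal.ofReal (1 / Ψ (2 * B * t)) * volume (Ioc (Ψ t) (Ψ (2 * t))) := by
        rw [Real.volume_Ioc, ← ENNReal.ofReal_mul (by positivity), one_div_mul_eq_div]
        gcongr
        linarith
    _ = ∫⁻ _ in Ioc (Ψ t) (Ψ (2 * t)), ENNReal.ofReal (1 / Ψ (2 * B * t)) :=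
        (setLIntegral_const _ _).symm
    _ ≤ ∫⁻ x in Ioc (Ψ t) (Ψ (2 * t)), ENNReal.ofReal (1 / Ψ (B * Ψinv x)) :=
        setLIntegral_mono' measurableSet_Ioc hbound

theorem stmt_9_general
    (Ψ Ψinv : ℝ → ℝ)
    (hΨ0 : Ψ 0 = 0)
    (hΨmono : StrictMonoOn Ψ (Set.Ici 0))
    (hΨconv : StrictConvexOn ℝ (Set.Ici 0) Ψ)
    (hΨinv1 : ∀ x, 0 ≤ x → Ψinv (Ψ x) = x)
    (hΨinv2 : ∀ y, 0 ≤ y → Ψ (Ψinv y) = y)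
    (hΨinv0 : ∀ y, 0 ≤ y → 0 ≤ Ψinv y)
    (B : ℝ) (hB : 1 < B)
    (hint : (∫⁻ x in Set.Ioi (Ψ 1), ENNReal.ofReal (1 / Ψ (B * Ψinv x))) < ⊤) :
    Filter.Tendsto (fun x => Ψ x / Ψ (2 * B * x)) Filter.atTop (nhds 0) ∧
    ∃ β > (1 : ℝ),
      Filter.Tendsto (fun x => Ψ (β * x) / Ψ x) Filter.atTop Filter.atTop := by
  have hΨpos : ∀ x, 0 < x → 0 < Ψ x := fun _ hx => hΨmono.pos_of_map_zero hΨ0 hx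
  have hΨinv : MonotoneOn Ψinv (Ici 0) := hΨmono.monotoneOn_of_rightInvOn_s9 hΨinv0 hΨinv2
  have htail : Tendsto (fun t => ∫⁻ x in Ioi (Ψ t), ENNReal.ofReal (1 / Ψ (B * Ψinv x)))
      atTop (𝓝 0) :=
    (tendsto_setLIntegral_Ioi_atTop hint.ne).comp
      (hΨconv.convexOn.tendsto_atTop hΨ0 (hΨpos 1 one_pos))
  have hofReal : Tendsto (fun t => ENNReal.ofReal (Ψ t / Ψ (2 * B * t))) atTop (𝓝 0) := by
    refine tendsto_of_tendsto_of_tendsto_of_le_of_le' tendsto_const_nhds htail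
      (.of_forall fun _ => zero_le) ?_
    filter_upwards [eventually_gt_atTop 0] with t ht
    exact (ofReal_div_le_setLIntegral_Ioc hΨ0 hΨmono hΨinv hΨinv1 (by linarith) ht
      (hΨconv.convexOn.two_mul_map_le_map_two_mul hΨ0 ht.le)).trans
      (lintegral_mono_set Ioc_subset_Ioi_self)
  have hsmall : Tendsto (fun x => Ψ x / Ψ (2 * B * x)) atTop (𝓝 0) := by
    have := (ENNReal.tendsto_toReal zero_ne_top).comp hofReal
    rw [toReal_zero] at this
    refine this.congr' ?_
    filter_upwards [eventually_gt_atTop 0] with t ht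
    exact ENNReal.toReal_ofReal (div_nonneg (hΨpos t ht).le (hΨpos _ (by positivity)).le)
  refine ⟨hsmall, 2 * B, by linarith, ?_⟩
  have hpos : ∀ᶠ x in atTop, Ψ x / Ψ (2 * B * x) ∈ Ioi 0 := by
    filter_upwards [eventually_gt_atTop 0] with x hx
    exact div_pos (hΨpos x hx) (hΨpos _ (by positivity))
  simpa only [Pi.inv_def, inv_div] using
    (tendsto_nhdsWithin_iff.2 ⟨hsmall, hpos⟩).inv_tendsto_nhdsGT_zero

theorem stmt_9
    (Ψ Ψinv : ℝ → ℝ)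
    (hΨ0 : Ψ 0 = 0)
    (hΨmono : StrictMonoOn Ψ (Set.Ici 0))
    (hΨconv : StrictConvexOn ℝ (Set.Ici 0) Ψ)
    (hΨcont : ContinuousOn Ψ (Set.Ici 0))
    (hΨlim : Filter.Tendsto (fun x => Ψ x / x) Filter.atTop Filter.atTop)
    (hΨinv1 : ∀ x, 0 ≤ x → Ψinv (Ψ x) = x)
    (hΨinv2 : ∀ y, 0 ≤ y → Ψ (Ψinv y) = y)
    (hΨinv0 : ∀ y, 0 ≤ y → 0 ≤ Ψinv y)
    (B : ℝ) (hB : 1 < B)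
    (hint : (∫⁻ x in Set.Ioi (Ψ 1), ENNReal.ofReal (1 / Ψ (B * Ψinv x))) < ⊤) :
    Filter.Tendsto (fun x => Ψ x / Ψ (2 * B * x)) Filter.atTop (nhds 0) ∧
    ∃ β > (1 : ℝ),
      Filter.Tendsto (fun x => Ψ (β * x) / Ψ x) Filter.atTop Filter.atTop :=
  stmt_9_general Ψ Ψinv hΨ0 hΨmono hΨconv hΨinv1 hΨinv2 hΨinv0 B hB hint
end

section
/- Define φ : 𝕋∖{1} → ℂ by φ(w) = ((1+w)/2)·exp(−(1+w)/(1−w)); one has |φ(w)| ≤ 1 for every w ∈ 𝕋∖{1}. There exist a constant C > 0 and h₀ ∈ (0,1) such that for every ξ ∈ 𝕋 and every h ∈ (0,h₀], m({w ∈ 𝕋∖{1} : |φ(w) − ξ| < h}) ≤ C·h^{3/2}. -/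
open MeasureTheory

/-- The boundary-value function `φ(w) = ((1+w)/2)·exp(−(1+w)/(1−w))`. -/
noncomputable def phi2 (w : ℂ) : ℂ :=
  ((1 + w) / 2) * Complex.exp (-(1 + w) / (1 - w))

/-! On the circle, `φ(e^{it}) = cos (t/2) · e^{iθ(t)}` with phase `θ = phi2Phase`, and
`φ(w̄) = conj (φ w)` reduces everything to `t ∈ (0, π]`. There, `|φ(e^{it}) - ξ| < h` forces
`cos (t/2) > 1 - h`, hence `t ≲ √h`, and puts `θ(t)` within `πh` of `arg ξ - 2πn` for some
`n ∈ ℕ`; since `θ(t) ≈ -2/t`, also `t ≲ 1/n`. As `θ' ≥ 2/t²`, the `t` hitting the `n`-th window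
form a set of length `≲ h · min (√h, 1/n)²`, and the sum over `n` is `O(h^{3/2})`. -/

open Set Complex ComplexConjugate Metric
open scoped Real

theorem norm_sub_le_two_mul_norm_smul_sub {E : Type*} [NormedAddCommGroup E] [NormedSpace ℝ E]
    {u ξ : E} (hu : ‖u‖ = 1) (hξ : ‖ξ‖ = 1) {ρ : ℝ} (hρ : 0 ≤ ρ) :
    ‖u - ξ‖ ≤ 2 * ‖ρ • u - ξ‖ := by
  have hshrink : ‖u - ρ • u‖ ≤ ‖ρ • u - ξ‖ :=
    calc ‖u - ρ • u‖ = ‖(1 - ρ) • u‖ := by rw [sub_smul, one_smul]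
      _ = |1 - ρ| := by rw [norm_smul, hu, mul_one, Real.norm_eq_abs]
      _ = |‖ξ‖ - ‖ρ • u‖| := by rw [hξ, norm_smul, hu, mul_one, Real.norm_of_nonneg hρ]
      _ ≤ ‖ρ • u - ξ‖ := by rw [norm_sub_rev]; exact abs_norm_sub_norm_le _ _
  calc ‖u - ξ‖ ≤ ‖u - ρ • u‖ + ‖ρ • u - ξ‖ := norm_sub_le_norm_sub_add_norm_sub _ _ _
    _ ≤ 2 * ‖ρ • u - ξ‖ := by linarith

theorem exists_int_abs_sub_le_mul_norm_exp_sub (x y : ℝ) :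
    ∃ k : ℤ, |x - y - k * (2 * π)| ≤ π / 2 * ‖exp (x * I) - exp (y * I)‖ := by
  refine ⟨toIocDiv Real.two_pi_pos (-π) (x - y), ?_⟩
  have h := angle_le_mul_norm_sub (norm_exp_ofReal_mul_I x) (norm_exp_ofReal_mul_I y)
  rwa [angle_exp_exp, toIocMod, zsmul_eq_mul] at h

theorem exp_mul_I_two_pi_sub (u : ℝ) : exp (((2 * π - u : ℝ) : ℂ) * I) = conj (exp (u * I)) := by
  rw [← exp_conj, map_mul, conj_ofReal, conj_I, ofReal_sub, sub_mul, exp_sub, ofReal_mul,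
    ofReal_ofNat, exp_two_pi_mul_I, mul_neg, exp_neg, one_div]

theorem volume_inter_preimage_closedBall_le {s : Set ℝ} (hs : s.OrdConnected) {f f' : ℝ → ℝ}
    (hf : ∀ x ∈ s, HasDerivAt f (f' x) x) {m : ℝ} (hm : 0 < m) (hmf' : ∀ x ∈ s, m ≤ f' x)
    (c r : ℝ) : volume (s ∩ f ⁻¹' closedBall c r) ≤ ENNReal.ofReal (2 * r / m) := by
  have key : ∀ x ∈ s ∩ f ⁻¹' closedBall c r, ∀ y ∈ s ∩ f ⁻¹' closedBall c r, x < y →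
      y - x ≤ 2 * r / m := by
    rintro x ⟨hxs, hxc⟩ y ⟨hys, hyc⟩ hxy
    have hxys : Icc x y ⊆ s := hs.out hxs hys
    obtain ⟨z, hz, hslope⟩ := exists_hasDerivAt_eq_slope f f' hxy
      (fun u hu => (hf u (hxys hu)).continuousAt.continuousWithinAt)
      (fun u hu => hf u (hxys (Ioo_subset_Icc_self hu)))
    have hm_le : m * (y - x) ≤ f y - f x := by
      rw [← le_div_iff₀ (sub_pos.2 hxy), ← hslope]
      exact hmf' z (hxys (Ioo_subset_Icc_self hz))
    rw [mem_preimage, mem_closedBall, Real.dist_eq] at hxc hyc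
    rw [le_div_iff₀ hm]
    linarith [abs_le.1 hxc, abs_le.1 hyc]
  refine (Real.volume_le_diam _).trans (Metric.ediam_le fun x hx y hy => ?_)
  rw [edist_dist, Real.dist_eq]
  refine ENNReal.ofReal_le_ofReal ?_
  rcases lt_trichotomy x y with hxy | rfl | hxy
  · rw [abs_sub_comm, abs_of_pos (sub_pos.2 hxy)]; exact key x hx y hy hxy
  · rw [sub_self, abs_zero]
    have hr : 0 ≤ r := dist_nonneg.trans hx.2
    positivity
  · rw [abs_of_pos (sub_pos.2 hxy)]; exact key y hy x hx hxy

theorem sum_range_inv_sq_add_le (N M : ℕ) :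
    ∑ k ∈ Finset.range M, (((N + 1 + k : ℕ) : ℝ) ^ 2)⁻¹ ≤ 2 / (N + 1) := by
  have h := sum_Ioo_inv_sq_le (α := ℝ) N (N + 1 + M)
  rwa [← Finset.Ico_add_one_left_eq_Ioo, Finset.sum_Ico_eq_sum_range, Nat.add_sub_cancel_left]
    at h

theorem sum_range_min_div_sq_le {δ a : ℝ} (hδ : 0 < δ) (ha : 0 ≤ a) (M : ℕ) :
    ∑ n ∈ Finset.range M, min δ (a / (n + 1)) ^ 2 ≤ (1 + 2 * a ^ 2) * δ := by
  set N := ⌊δ⁻¹⌋₊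
  have hN : (N : ℝ) * δ ≤ 1 := by
    rw [← le_div_iff₀ hδ, one_div]; exact Nat.floor_le (by positivity)
  have hN' : (N + 1 : ℝ)⁻¹ ≤ δ := by
    rw [inv_le_comm₀ (by positivity) hδ]; exact (Nat.lt_floor_add_one _).le
  calc ∑ n ∈ Finset.range M, min δ (a / (n + 1)) ^ 2
      ≤ ∑ n ∈ Finset.range (N + M), min δ (a / (n + 1)) ^ 2 :=
        Finset.sum_le_sum_of_subset_of_nonneg (Finset.range_subset_range.2 (by omega))
          fun _ _ _ => sq_nonneg _
    _ = ∑ n ∈ Finset.range N, min δ (a / (n + 1)) ^ 2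
          + ∑ k ∈ Finset.range M, min δ (a / ((N + k : ℕ) + 1)) ^ 2 := Finset.sum_range_add _ _ _
    _ ≤ ∑ n ∈ Finset.range N, δ ^ 2
          + ∑ k ∈ Finset.range M, a ^ 2 * (((N + 1 + k : ℕ) : ℝ) ^ 2)⁻¹ := by
        gcongr with n _ k _
        · exact min_le_left _ _
        · have hmin : 0 ≤ min δ (a / ((N + k : ℕ) + 1)) := le_min hδ.le (by positivity)
          calc min δ (a / ((N + k : ℕ) + 1)) ^ 2 ≤ (a / ((N + k : ℕ) + 1)) ^ 2 :=
                pow_le_pow_left₀ hmin (min_le_right _ _) 2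
            _ = a ^ 2 * (((N + 1 + k : ℕ) : ℝ) ^ 2)⁻¹ := by
              rw [div_pow, div_eq_mul_inv]; push_cast; ring
    _ ≤ N * δ ^ 2 + a ^ 2 * (2 / (N + 1)) := by
        rw [Finset.sum_const, Finset.card_range, nsmul_eq_mul, ← Finset.mul_sum]
        gcongr
        exact sum_range_inv_sq_add_le N M
    _ ≤ (1 + 2 * a ^ 2) * δ := by
        rw [div_eq_mul_inv]
        nlinarith [mul_le_mul_of_nonneg_right hN (sq_nonneg δ),
          mul_le_mul_of_nonneg_left hN' (by positivity : 0 ≤ 2 * a ^ 2)]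

theorem le_five_mul_sqrt_of_one_sub_cos_half_lt {t h : ℝ} (ht0 : 0 ≤ t) (ht : t ≤ 2 * π)
    (hcos : 1 - Real.cos (t / 2) < h) : t ≤ 5 * √h := by
  have hquad := Real.cos_le_one_sub_mul_cos_sq (x := t / 2)
    (by rw [abs_of_nonneg (by positivity)]; linarith)
  have hπ : π ^ 2 < 10 := by nlinarith [Real.pi_lt_d2, Real.pi_pos]
  have h0 : 0 ≤ h := by linarith [Real.cos_le_one (t / 2)]
  have ht2 : (t / 2) ^ 2 ≤ π ^ 2 / 2 * h :=
    calc (t / 2) ^ 2 = π ^ 2 / 2 * (2 / π ^ 2 * (t / 2) ^ 2) := by field_simp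
      _ ≤ π ^ 2 / 2 * h := by gcongr; linarith
  have ht5 : (t / 5) ^ 2 ≤ h := by nlinarith [mul_le_mul_of_nonneg_right hπ.le h0]
  linarith [Real.le_sqrt_of_sq_le ht5]

theorem five_mul_sqrt_le_one {h : ℝ} (hh : h ≤ 1 / 25) : 5 * √h ≤ 1 := by
  have hsqrt : √h ≤ 1 / 5 := Real.sqrt_le_iff.2 ⟨by norm_num, by linarith⟩
  linarith

noncomputable def phi2Phase (t : ℝ) : ℝ := t / 2 - Real.cot (t / 2)

theorem measurable_phi2 : Measurable phi2 := by
  unfold phi2; fun_prop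

theorem phi2_conj (w : ℂ) : phi2 (conj w) = conj (phi2 w) := by
  simp only [phi2, map_mul, map_div₀, map_add, map_sub, map_neg, map_one, map_ofNat, ← exp_conj]

theorem phi2_exp_mul_I (t : ℝ) :
    phi2 (exp (t * I)) = Real.cos (t / 2) * exp (phi2Phase t * I) := by
  set z : ℂ := ((t / 2 : ℝ) : ℂ)
  have hw : exp (t * I) = exp (2 * I * z) := by congr 1; push_cast [z]; ring
  have hcos : (1 + exp (2 * I * z)) / 2 = cos z * exp (z * I) := by
    rw [cos, div_mul_eq_mul_div, add_mul, ← Complex.exp_add, ← Complex.exp_add, neg_mul,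
      neg_add_cancel, Complex.exp_zero]
    ring_nf
  have hcot : -(1 + exp (2 * I * z)) / (1 - exp (2 * I * z)) = -cot z * I := by
    rw [cot_eq_exp_ratio]
    -- at `t ∈ 2πℤ` both sides are the junk value `0` of a division by zero
    by_cases h : 1 - exp (2 * I * z) = 0
    · simp [h]
    · field_simp
      ring_nf
  rw [phi2, hw, hcos, hcot, mul_assoc, ← Complex.exp_add, phi2Phase]
  push_cast [z, ofReal_cot]
  ring_nf

theorem norm_phi2_exp_mul_I (t : ℝ) : ‖phi2 (exp (t * I))‖ = |Real.cos (t / 2)| := by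
  rw [phi2_exp_mul_I, norm_mul, norm_exp_ofReal_mul_I, mul_one, norm_real, Real.norm_eq_abs]

theorem norm_phi2_le_one {w : ℂ} (hw : ‖w‖ = 1) : ‖phi2 w‖ ≤ 1 := by
  have hw : w = exp (w.arg * I) := by simpa [hw] using (norm_mul_exp_arg_mul_I w).symm
  rw [hw, norm_phi2_exp_mul_I]
  exact Real.abs_cos_le_one _

theorem hasDerivAt_phi2Phase {t : ℝ} (ht : Real.sin (t / 2) ≠ 0) :
    HasDerivAt phi2Phase (1 / 2 + 1 / (2 * Real.sin (t / 2) ^ 2)) t := by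
  have hhalf : HasDerivAt (fun u : ℝ => u / 2) (1 / 2) t := (hasDerivAt_id t).div_const 2
  have hphase : phi2Phase = fun u => u / 2 - Real.cos (u / 2) / Real.sin (u / 2) := by
    ext u; rw [phi2Phase, Real.cot_eq_cos_div_sin]
  rw [hphase]
  refine (hhalf.sub (hhalf.cos.div hhalf.sin ht)).congr_deriv ?_
  field_simp
  linear_combination Real.sin_sq_add_cos_sq (t / 2)

theorem phi2Phase_le_half {t : ℝ} (h0 : 0 < t) (hπ : t ≤ π) : phi2Phase t ≤ t / 2 := by
  have hcot : 0 ≤ Real.cot (t / 2) := by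
    rw [Real.cot_eq_cos_div_sin]
    exact div_nonneg (Real.cos_nonneg_of_mem_Icc ⟨by linarith [Real.pi_pos], by linarith⟩)
      (Real.sin_nonneg_of_nonneg_of_le_pi (by linarith) (by linarith [Real.pi_pos]))
  rw [phi2Phase]
  linarith

theorem neg_two_div_le_phi2Phase {t : ℝ} (h0 : 0 < t) (hπ : t < π) : -(2 / t) ≤ phi2Phase t := by
  have htan : t / 2 < Real.tan (t / 2) := Real.lt_tan (by positivity) (by linarith)
  have hcot : Real.cot (t / 2) ≤ 2 / t :=
    calc Real.cot (t / 2) = (Real.tan (t / 2))⁻¹ := by rw [← Real.cot_inv_eq_tan, inv_inv]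
      _ ≤ (t / 2)⁻¹ := inv_anti₀ (by positivity) htan.le
      _ = 2 / t := inv_div _ _
  rw [phi2Phase]
  linarith

theorem le_four_div_of_phi2Phase_le {t α : ℝ} {n : ℕ} (h0 : 0 < t) (ht : t ≤ 1) (hα : α ≤ π)
    (hphase : phi2Phase t ≤ α - 2 * π * n + π / 2) : t ≤ 4 / (n + 1) := by
  rw [le_div_iff₀ (by positivity)]
  rcases Nat.eq_zero_or_pos n with rfl | hn
  · push_cast; linarith
  have hn1 : (1 : ℝ) ≤ n := by exact_mod_cast hn
  have hlow := neg_two_div_le_phi2Phase h0 (ht.trans_lt (by linarith [Real.pi_gt_three]))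
  have h2 : π * (2 * n - 3 / 2) * t ≤ 2 := by
    have : π * (2 * n - 3 / 2) ≤ 2 / t := by nlinarith [Real.pi_pos]
    rwa [le_div_iff₀ h0] at this
  nlinarith [Real.pi_gt_three]

theorem volume_Ioc_inter_preimage_phi2Phase_le {b : ℝ} (hb0 : 0 < b) (hb : b ≤ 1) (c r : ℝ) :
    volume (Ioc 0 b ∩ phi2Phase ⁻¹' closedBall c r) ≤ ENNReal.ofReal (r * b ^ 2) := by
  have hsin : ∀ x ∈ Ioc 0 b, 0 < Real.sin (x / 2) := fun x hx =>
    Real.sin_pos_of_pos_of_lt_pi (by linarith [hx.1]) (by linarith [hx.2, Real.pi_gt_three])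
  have hderiv : ∀ x ∈ Ioc 0 b, 2 / b ^ 2 ≤ 1 / 2 + 1 / (2 * Real.sin (x / 2) ^ 2) := by
    intro x hx
    have hsx : Real.sin (x / 2) ≤ b / 2 :=
      (Real.sin_le (by linarith [hx.1])).trans (by linarith [hx.2])
    calc 2 / b ^ 2 = 1 / (2 * (b / 2) ^ 2) := by field_simp
      _ ≤ 1 / (2 * Real.sin (x / 2) ^ 2) := by
          have := hsin x hx
          gcongr
      _ ≤ _ := by linarith
  convert volume_inter_preimage_closedBall_le ordConnected_Ioc
    (fun x hx => hasDerivAt_phi2Phase (hsin x hx).ne') (by positivity) hderiv c r using 2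
  field_simp

theorem exists_nat_abs_phi2Phase_sub_le {ξ : ℂ} (hξ : ‖ξ‖ = 1) {h t : ℝ} (hh : h ≤ 1 / 25)
    (ht : t ∈ Ioc 0 π) (hangular : ‖exp (phi2Phase t * I) - ξ‖ < 2 * h) :
    ∃ n : ℕ, |phi2Phase t - (arg ξ - 2 * π * n)| ≤ π * h := by
  obtain ⟨k, hk⟩ := exists_int_abs_sub_le_mul_norm_exp_sub (phi2Phase t) (arg ξ)
  rw [show exp (arg ξ * I) = ξ by simpa [hξ] using norm_mul_exp_arg_mul_I ξ] at hk
  have hk' : |phi2Phase t - arg ξ - k * (2 * π)| ≤ π * h := by nlinarith [Real.pi_pos]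
  have hk0 : k ≤ 0 := by
    by_contra! hk0
    have hk1 : (1 : ℝ) ≤ k := by exact_mod_cast hk0
    have hphase := phi2Phase_le_half ht.1 ht.2
    nlinarith [neg_abs_le (phi2Phase t - arg ξ - k * (2 * π)), neg_pi_lt_arg ξ, ht.2,
      Real.pi_pos, mul_le_mul_of_nonneg_right hk1 Real.pi_pos.le,
      mul_le_mul_of_nonneg_left hh Real.pi_pos.le]
  obtain ⟨n, rfl⟩ := Int.exists_eq_neg_ofNat hk0
  exact ⟨n, by convert hk' using 2; push_cast; ring⟩

theorem exists_nat_of_norm_phi2_sub_lt {ξ : ℂ} (hξ : ‖ξ‖ = 1) {h t : ℝ} (hh : h ≤ 1 / 25)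
    (ht : t ∈ Ioc 0 π) (hφ : ‖phi2 (exp (t * I)) - ξ‖ < h) :
    ∃ n : ℕ, t ≤ min (5 * √h) (4 / (n + 1)) ∧
      phi2Phase t ∈ closedBall (arg ξ - 2 * π * n) (π * h) := by
  have hcos : 0 ≤ Real.cos (t / 2) :=
    Real.cos_nonneg_of_mem_Icc ⟨by linarith [Real.pi_pos, ht.1], by linarith [ht.2]⟩
  have hradial : 1 - Real.cos (t / 2) < h := by
    have h := norm_sub_norm_le ξ (phi2 (exp (t * I)))
    rw [hξ, norm_phi2_exp_mul_I, abs_of_nonneg hcos, norm_sub_rev] at h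
    linarith
  have ht5 : t ≤ 5 * √h :=
    le_five_mul_sqrt_of_one_sub_cos_half_lt ht.1.le (by linarith [ht.2, Real.pi_pos]) hradial
  have hangular : ‖exp (phi2Phase t * I) - ξ‖ < 2 * h := by
    refine (norm_sub_le_two_mul_norm_smul_sub (norm_exp_ofReal_mul_I _) hξ hcos).trans_lt ?_
    rw [real_smul, ← phi2_exp_mul_I]
    linarith
  obtain ⟨n, hn⟩ := exists_nat_abs_phi2Phase_sub_le hξ hh ht hangular
  have hπh : π * h ≤ π / 2 := by nlinarith [Real.pi_pos]
  refine ⟨n, le_min ht5 (le_four_div_of_phi2Phase_le ht.1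
    (ht5.trans (five_mul_sqrt_le_one hh)) (arg_le_pi ξ) ?_), ?_⟩
  · linarith [(abs_le.1 hn).2]
  · rwa [mem_closedBall, Real.dist_eq]

noncomputable def phi2ArcSet (ξ : ℂ) (h : ℝ) : Set ℝ :=
  {t | t ∈ Ioc 0 π ∧ ‖phi2 (exp (t * I)) - ξ‖ < h}

theorem volume_phi2ArcSet_le {ξ : ℂ} (hξ : ‖ξ‖ = 1) {h : ℝ} (hh0 : 0 < h) (hh : h ≤ 1 / 25) :
    volume (phi2ArcSet ξ h) ≤ ENNReal.ofReal (165 * π * h ^ ((3 : ℝ) / 2)) := by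
  set δ := 5 * √h
  set b : ℕ → ℝ := fun n => min δ (4 / (n + 1))
  have hδ : δ ≤ 1 := five_mul_sqrt_le_one hh
  have hb0 : ∀ n, 0 < b n := fun n => lt_min (by positivity) (by positivity)
  have hcover : phi2ArcSet ξ h ⊆
      ⋃ n : ℕ, Ioc 0 (b n) ∩ phi2Phase ⁻¹' closedBall (arg ξ - 2 * π * n) (π * h) := by
    rintro t ⟨ht, hφ⟩
    obtain ⟨n, hn, hball⟩ := exists_nat_of_norm_phi2_sub_lt hξ hh ht hφ
    exact mem_iUnion.2 ⟨n, ⟨ht.1, hn⟩, hball⟩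
  have hsum : ∀ M, ∑ n ∈ Finset.range M, ENNReal.ofReal (π * h * b n ^ 2)
      ≤ ENNReal.ofReal (π * h * ((1 + 2 * 4 ^ 2) * δ)) := by
    intro M
    rw [← ENNReal.ofReal_sum_of_nonneg (fun n _ => by positivity), ← Finset.mul_sum]
    exact ENNReal.ofReal_le_ofReal (mul_le_mul_of_nonneg_left
      (sum_range_min_div_sq_le (by positivity) (by norm_num) M) (by positivity))
  calc volume (phi2ArcSet ξ h)
      ≤ ∑' n : ℕ, volume (Ioc 0 (b n) ∩ phi2Phase ⁻¹' closedBall (arg ξ - 2 * π * n) (π * h)) :=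
        (measure_mono hcover).trans (measure_iUnion_le _)
    _ ≤ ∑' n : ℕ, ENNReal.ofReal (π * h * b n ^ 2) := ENNReal.tsum_le_tsum fun n =>
        volume_Ioc_inter_preimage_phi2Phase_le (hb0 n) ((min_le_left _ _).trans hδ) _ _
    _ ≤ ENNReal.ofReal (π * h * ((1 + 2 * 4 ^ 2) * δ)) := ENNReal.tsum_le_of_sum_range_le hsum
    _ = ENNReal.ofReal (165 * π * h ^ ((3 : ℝ) / 2)) := by
        rw [Real.rpow_div_two_eq_sqrt _ hh0.le, show ((3 : ℝ)) = (3 : ℕ) by norm_num,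
          Real.rpow_natCast]
        congr 1
        linear_combination (-165 * π * √h) * Real.sq_sqrt hh0.le

theorem volume_exp_mul_I_preimage_le (ξ : ℂ) (h : ℝ) :
    volume ((fun t : ℝ => exp (t * I)) ⁻¹' {w | w ≠ 1 ∧ ‖phi2 w - ξ‖ < h} ∩ Ioc 0 (2 * π))
      ≤ volume (phi2ArcSet ξ h) + volume (phi2ArcSet (conj ξ) h) := by
  have hreflect : volume ((fun t => 2 * π - t) ⁻¹' phi2ArcSet (conj ξ) h)
      = volume (phi2ArcSet (conj ξ) h) := by
    have : (fun t => 2 * π - t) ⁻¹' phi2ArcSet (conj ξ) h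
        = Neg.neg ⁻¹' ((fun t => 2 * π + t) ⁻¹' phi2ArcSet (conj ξ) h) := by
      ext t; simp [sub_eq_add_neg]
    rw [this, Measure.measure_preimage_neg, measure_preimage_add]
  rw [← hreflect]
  refine (measure_mono ?_).trans (measure_union_le _ _)
  rintro t ⟨⟨hne, hφ⟩, ht0, ht⟩
  rcases le_or_gt t π with htπ | htπ
  · exact Or.inl ⟨⟨ht0, htπ⟩, hφ⟩
  right
  have ht2π : t < 2 * π := by
    refine ht.lt_of_ne fun h2π => hne ?_
    simp only [h2π, ofReal_mul, ofReal_ofNat, exp_two_pi_mul_I]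
  refine ⟨⟨by simp only; linarith, by simp only; linarith⟩, ?_⟩
  rwa [exp_mul_I_two_pi_sub, phi2_conj, ← map_sub, norm_conj]

theorem circleMeasure_apply {S : Set ℂ} (hS : MeasurableSet S) :
    circleMeasure S = (ENNReal.ofReal (2 * π))⁻¹ *
      volume ((fun t : ℝ => exp (t * I)) ⁻¹' S ∩ Ioc 0 (2 * π)) := by
  have hexp : Measurable fun t : ℝ => exp (t * I) := by fun_prop
  rw [circleMeasure, Measure.smul_apply, Measure.map_apply hexp hS,
    Measure.restrict_apply (hexp hS), smul_eq_mul]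

theorem stmt_11 :
    (∀ w : ℂ, ‖w‖ = 1 → w ≠ 1 → ‖phi2 w‖ ≤ 1) ∧
    ∃ C > (0 : ℝ), ∃ h₀ : ℝ, 0 < h₀ ∧ h₀ < 1 ∧
      ∀ ξ : ℂ, ‖ξ‖ = 1 → ∀ h : ℝ, 0 < h → h ≤ h₀ →
        circleMeasure {w : ℂ | w ≠ 1 ∧ ‖phi2 w - ξ‖ < h}
          ≤ ENNReal.ofReal (C * h ^ ((3 : ℝ) / 2)) := by
  refine ⟨fun w hw _ => norm_phi2_le_one hw, 165, by norm_num, 1 / 25, by norm_num, by norm_num, ?_⟩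
  intro ξ hξ h hh hh₀
  have hS : MeasurableSet {w : ℂ | w ≠ 1 ∧ ‖phi2 w - ξ‖ < h} :=
    (measurableSet_singleton 1).compl.inter
      (measurableSet_lt (measurable_phi2.sub_const ξ).norm measurable_const)
  rw [circleMeasure_apply hS]
  calc (ENNReal.ofReal (2 * π))⁻¹ * volume _
      ≤ (ENNReal.ofReal (2 * π))⁻¹ * (ENNReal.ofReal (165 * π * h ^ ((3 : ℝ) / 2))
          + ENNReal.ofReal (165 * π * h ^ ((3 : ℝ) / 2))) := by
        gcongr
        refine (volume_exp_mul_I_preimage_le ξ h).trans (add_le_add ?_ ?_)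
        · exact volume_phi2ArcSet_le hξ hh hh₀
        · exact volume_phi2ArcSet_le (by rwa [norm_conj]) hh hh₀
    _ = ENNReal.ofReal (165 * h ^ ((3 : ℝ) / 2)) := by
        rw [← ENNReal.ofReal_add (by positivity) (by positivity),
          ← ENNReal.ofReal_inv_of_pos (by positivity), ← ENNReal.ofReal_mul (by positivity)]
        congr 1
        field_simp
        ring
end

section
/- Let μ be a finite positive Borel measure on the open unit disk 𝔻 = {z ∈ ℂ : |z| < 1} and let f be holomorphic on 𝔻. For w ∈ 𝕋 define the maximal function M_f(w) = sup{ |f(z)| : z ∈ 𝔻, |w − z| < 3(1−|z|) }. Then for every h ∈ (0,1] and every t > 0, μ({z ∈ 𝔻 : |z| > 1−h and |f(z)| > t}) ≤ 2π · K_μ(h) · m({w ∈ 𝕋 : M_f(w) > t}), the inequality being understood in [0,∞] (K_μ(h) may be infinite). -/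
open MeasureTheory

/-- The Carleson window `W(ξ,h)`. -/
def carlesonWindow (ξ : ℂ) (h : ℝ) : Set ℂ :=
  {z : ℂ | ‖z‖ ≤ 1 ∧ 1 - h < ‖z‖ ∧
    |Complex.arg (z * (starRingEnd ℂ) ξ)| < h}

/-- `ρ_μ(h) = sup_{ξ ∈ 𝕋} μ(W(ξ,h))`. -/
noncomputable def rhoMu (μ : Measure ℂ) (h : ℝ) : ENNReal :=
  ⨆ ξ : {ξ : ℂ // ‖ξ‖ = 1}, μ (carlesonWindow (ξ : ℂ) h)

/-- `K_μ(h) = sup_{0 < t ≤ h} ρ_μ(t)/t`. -/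
noncomputable def KMu (μ : Measure ℂ) (h : ℝ) : ENNReal :=
  ⨆ t : {t : ℝ // t ∈ Set.Ioc 0 h}, rhoMu μ (t : ℝ) / ENNReal.ofReal (t : ℝ)

/-- The non-tangential maximal function
`M_f(w) = sup{|f(z)| : z ∈ 𝔻, |w − z| < 3(1−|z|)}`, valued in `[0,∞]`. -/
noncomputable def maxFun (f : ℂ → ℂ) (w : ℂ) : ENNReal :=
  ⨆ z : {z : ℂ // ‖z‖ < 1 ∧ ‖w - z‖ < 3 * (1 - ‖z‖)},
    ENNReal.ofReal ‖f (z : ℂ)‖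

/-!
Each point `z` of the level set lies radially above the arc of angular radius `1 - ‖z‖` centred
at its argument, and that whole arc lies in `{M_f > t}`, because every point `w` of it satisfies
`‖w - z‖ ≤ 2 (1 - ‖z‖)`. Lift the arguments to a period `(θ₀, θ₀ + 2π]` whose endpoint lies
outside the angular level set `O` (if there is none, `O` is everything and one covers directly).
The points above a component `J` of `O` then have `1 - ‖z‖ < min (|J| / 2) h`, and `≈ |J| / ℓ`
Carleson windows of size `ℓ = min (|J| / 2) h` cover them, each of measure `≤ K_μ(h) ℓ`.
Summing over the countably many components gives `μ ≤ K_μ(h) |O ∩ (0, 2π]|`.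
-/

section

open Complex Set

lemma abs_arg_mul_exp_mul_I_le {r : ℝ} (hr : 0 ≤ r) (ψ : ℝ) :
    |arg (r * exp (ψ * I))| ≤ |ψ| := by
  rcases hr.eq_or_lt with rfl | hr
  · simp
  rw [arg_real_mul _ hr]
  by_cases hψ : |ψ| < Real.pi
  · obtain ⟨h₁, h₂⟩ := abs_lt.mp hψ
    rw [exp_mul_I, arg_cos_add_sin_mul_I ⟨h₁, h₂.le⟩]
  · exact (abs_arg_le_pi _).trans (not_lt.mp hψ)

lemma mem_carlesonWindow_exp {z : ℂ} {ℓ θ φ : ℝ} (hz : ‖z‖ ≤ 1) (hzℓ : 1 - ℓ < ‖z‖)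
    (hzθ : z = ‖z‖ * exp (θ * I)) (hθφ : |θ - φ| < ℓ) :
    z ∈ carlesonWindow (exp (φ * I)) ℓ := by
  refine ⟨hz, hzℓ, lt_of_le_of_lt ?_ hθφ⟩
  have hrot : z * (starRingEnd ℂ) (exp (φ * I)) = ‖z‖ * exp ((θ - φ : ℝ) * I) := by
    rw [← exp_conj, map_mul, conj_ofReal, conj_I]
    nth_rewrite 1 [hzθ]
    rw [mul_assoc, ← exp_add]
    push_cast
    ring_nf
  rw [hrot]
  exact abs_arg_mul_exp_mul_I_le (norm_nonneg z) _

lemma measure_carlesonWindow_le_KMu_mul (μ : Measure ℂ) {h ℓ : ℝ} (hℓ : 0 < ℓ)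
    (hℓh : ℓ ≤ h) {ξ : ℂ} (hξ : ‖ξ‖ = 1) :
    μ (carlesonWindow ξ ℓ) ≤ KMu μ h * ENNReal.ofReal ℓ := by
  have hρ : rhoMu μ ℓ / ENNReal.ofReal ℓ ≤ KMu μ h :=
    le_iSup (fun s : {s : ℝ // s ∈ Ioc 0 h} => rhoMu μ s / ENNReal.ofReal s) ⟨ℓ, hℓ, hℓh⟩
  calc μ (carlesonWindow ξ ℓ)
      ≤ rhoMu μ ℓ := le_iSup (fun ζ : {ζ : ℂ // ‖ζ‖ = 1} => μ (carlesonWindow ζ ℓ)) ⟨ξ, hξ⟩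
    _ = rhoMu μ ℓ / ENNReal.ofReal ℓ * ENNReal.ofReal ℓ :=
        (ENNReal.div_mul_cancel (by simpa using hℓ) ENNReal.ofReal_ne_top).symm
    _ ≤ KMu μ h * ENNReal.ofReal ℓ := by gcongr

lemma exists_abs_sub_center_le {a s θ : ℝ} {N : ℕ} (hs : 0 < s) (hθ : θ ∈ Ioc a (a + N * s)) :
    ∃ k < N, |θ - (a + k * s + s / 2)| ≤ s / 2 := by
  set q := (θ - a) / s
  have hq : 0 < q := div_pos (by linarith [hθ.1]) hs
  have hqN : q ≤ N := by rw [div_le_iff₀ hs]; linarith [hθ.2]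
  have hc : 1 ≤ ⌈q⌉₊ := Nat.one_le_iff_ne_zero.mpr (Nat.ceil_pos.mpr hq).ne'
  refine ⟨⌈q⌉₊ - 1, by have := Nat.ceil_le.mpr hqN; omega, ?_⟩
  have hlo : ((⌈q⌉₊ - 1 : ℕ) : ℝ) < q := by
    rw [Nat.cast_sub hc, Nat.cast_one]; linarith [Nat.ceil_lt_add_one hq.le]
  have hhi : q ≤ ((⌈q⌉₊ - 1 : ℕ) : ℝ) + 1 := by
    rw [Nat.cast_sub hc, Nat.cast_one, sub_add_cancel]; exact Nat.le_ceil q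
  have hθq : θ = a + q * s := by rw [div_mul_cancel₀ _ hs.ne']; ring
  rw [hθq, abs_le]
  constructor <;> nlinarith

lemma exists_nat_mul_le_and_div_lt {L ℓ : ℝ} (hℓ : 0 < ℓ) (hℓL : ℓ ≤ L / 2) :
    ∃ N : ℕ, 0 < N ∧ N * ℓ ≤ L ∧ L / N < 2 * ℓ := by
  refine ⟨⌊L / (2 * ℓ)⌋₊ + 1, Nat.succ_pos _, ?_, ?_⟩
  · have hN : ((⌊L / (2 * ℓ)⌋₊ + 1 : ℕ) : ℝ) ≤ L / (2 * ℓ) + 1 := by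
      push_cast; linarith [Nat.floor_le (div_nonneg (by linarith) (by linarith) : 0 ≤ L / (2 * ℓ))]
    calc ((⌊L / (2 * ℓ)⌋₊ + 1 : ℕ) : ℝ) * ℓ ≤ (L / (2 * ℓ) + 1) * ℓ := by gcongr
      _ = L / 2 + ℓ := by field_simp
      _ ≤ L := by linarith
  · have hN : L / (2 * ℓ) < ((⌊L / (2 * ℓ)⌋₊ + 1 : ℕ) : ℝ) := by
      push_cast; exact Nat.lt_floor_add_one _
    rw [div_lt_iff₀ (by positivity)] at hN ⊢
    linarith

lemma measure_le_KMu_mul_of_forall_mem_arc (μ : Measure ℂ) {F : Set ℂ}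
    {a b h : ℝ} (hab : a < b) (hh : 0 < h)
    (hF : ∀ z ∈ F, ‖z‖ ≤ 1 ∧ 1 - ‖z‖ < min ((b - a) / 2) h ∧
      ∃ θ ∈ Ioc a b, z = ‖z‖ * exp (θ * I)) :
    μ F ≤ KMu μ h * ENNReal.ofReal (b - a) := by
  set ℓ := min ((b - a) / 2) h
  have hℓ : 0 < ℓ := lt_min (by linarith) hh
  obtain ⟨N, hN, hNℓ, hsℓ⟩ := exists_nat_mul_le_and_div_lt hℓ (min_le_left _ _)
  set s := (b - a) / N
  have hs : 0 < s := div_pos (by linarith) (by exact_mod_cast hN)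
  have hNs : a + N * s = b := by rw [mul_div_cancel₀ _ (by exact_mod_cast hN.ne')]; ring
  set W := fun k : ℕ => carlesonWindow (exp ((a + k * s + s / 2 : ℝ) * I)) ℓ
  have hcover : F ⊆ ⋃ k ∈ Finset.range N, W k := by
    intro z hz
    obtain ⟨hz1, hzℓ, θ, hθ, hzθ⟩ := hF z hz
    obtain ⟨k, hk, hθk⟩ := exists_abs_sub_center_le hs (hNs ▸ hθ)
    exact mem_biUnion (Finset.mem_range.mpr hk)
      (mem_carlesonWindow_exp hz1 (by linarith) hzθ (by linarith))
  calc μ F ≤ ∑ k ∈ Finset.range N, μ (W k) := (μ.mono hcover).trans (measure_biUnion_finset_le _ _)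
    _ ≤ ∑ _k ∈ Finset.range N, KMu μ h * ENNReal.ofReal ℓ := Finset.sum_le_sum fun k _ =>
        measure_carlesonWindow_le_KMu_mul μ hℓ (min_le_right _ _) (norm_exp_ofReal_mul_I _)
    _ = KMu μ h * ENNReal.ofReal (N * ℓ) := by
        rw [Finset.sum_const, Finset.card_range, nsmul_eq_mul, ENNReal.ofReal_mul (by positivity),
          ENNReal.ofReal_natCast, mul_left_comm]
    _ ≤ KMu μ h * ENNReal.ofReal (b - a) := by gcongr

section OrderTopology

variable {α : Type*} [ConditionallyCompleteLinearOrder α] [TopologicalSpace α] [OrderTopology α]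
  [DenselyOrdered α] {U : Set α} {x : α}

lemma csInf_lt_of_isOpen [NoMinOrder α] (hU : IsOpen U) (hb : BddBelow U) (hx : x ∈ U) :
    sInf U < x := by
  obtain ⟨l, hl, hlU⟩ := exists_Ioc_subset_of_mem_nhds (hU.mem_nhds hx) (exists_lt x)
  obtain ⟨y, hly, hyx⟩ := exists_between hl
  exact (csInf_le hb (hlU ⟨hly, hyx.le⟩)).trans_lt hyx

lemma lt_csSup_of_isOpen [NoMaxOrder α] (hU : IsOpen U) (hb : BddAbove U) (hx : x ∈ U) :
    x < sSup U := by
  obtain ⟨u, hu, huU⟩ := exists_Ico_subset_of_mem_nhds (hU.mem_nhds hx) (exists_gt x)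
  obtain ⟨y, hxy, hyu⟩ := exists_between hu
  exact hxy.trans_le (le_csSup hb (huU ⟨hxy.le, hyu⟩))

end OrderTopology

lemma measure_le_KMu_mul_volume_of_isConnected (μ : Measure ℂ) {J : Set ℝ} {F : Set ℂ} {h : ℝ}
    (hh : 0 < h) (hJo : IsOpen J) (hJc : IsConnected J) (hJb : Bornology.IsBounded J)
    (hF : ∀ z ∈ F, ‖z‖ ≤ 1 ∧ 1 - ‖z‖ < h ∧
      ∃ θ : ℝ, z = ‖z‖ * exp (θ * I) ∧ Icc (θ - (1 - ‖z‖)) (θ + (1 - ‖z‖)) ⊆ J) :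
    μ F ≤ KMu μ h * volume J := by
  obtain ⟨x, hx⟩ := hJc.nonempty
  have hab : sInf J < sSup J :=
    (csInf_lt_of_isOpen hJo hJb.bddBelow hx).trans (lt_csSup_of_isOpen hJo hJb.bddAbove hx)
  have hF' : ∀ z ∈ F, ‖z‖ ≤ 1 ∧ 1 - ‖z‖ < min ((sSup J - sInf J) / 2) h ∧
      ∃ θ ∈ Ioc (sInf J) (sSup J), z = ‖z‖ * exp (θ * I) := by
    intro z hz
    obtain ⟨hz1, hzh, θ, hzθ, harc⟩ := hF z hz
    have hlo := csInf_lt_of_isOpen hJo hJb.bddBelow (harc ⟨le_rfl, by linarith⟩)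
    have hhi := lt_csSup_of_isOpen hJo hJb.bddAbove (harc ⟨by linarith, le_rfl⟩)
    exact ⟨hz1, lt_min (by linarith) hzh, θ, ⟨by linarith, by linarith⟩, hzθ⟩
  calc μ F ≤ KMu μ h * ENNReal.ofReal (sSup J - sInf J) :=
        measure_le_KMu_mul_of_forall_mem_arc μ hab hh hF'
    _ = KMu μ h * volume (Ioo (sInf J) (sSup J)) := by rw [Real.volume_Ioo]
    _ ≤ KMu μ h * volume J := by
        gcongr; exact hJc.Ioo_csInf_csSup_subset hJb.bddBelow hJb.bddAbove

lemma measure_le_KMu_mul_volume_of_isOpen (μ : Measure ℂ) {U : Set ℝ} {F : Set ℂ} {h : ℝ}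
    (hh : 0 < h) (hU : IsOpen U) (hUb : Bornology.IsBounded U)
    (hF : ∀ z ∈ F, ‖z‖ ≤ 1 ∧ 1 - ‖z‖ < h ∧
      ∃ θ : ℝ, z = ‖z‖ * exp (θ * I) ∧ Icc (θ - (1 - ‖z‖)) (θ + (1 - ‖z‖)) ⊆ U) :
    μ F ≤ KMu μ h * volume U := by
  choose! Θ hΘ using fun z hz => (hF z hz).2.2
  have hΘU : ∀ z ∈ F, Θ z ∈ U := fun z hz =>
    (hΘ z hz).2 ⟨by linarith [(hF z hz).1], by linarith [(hF z hz).1]⟩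
  set J := fun z => connectedComponentIn U (Θ z)
  have hdisj : (J '' F).PairwiseDisjoint id := by
    rintro _ ⟨z, -, rfl⟩ _ ⟨w, -, rfl⟩ hne
    refine Set.disjoint_left.mpr fun x hxz hxw => hne ?_
    exact (connectedComponentIn_eq hxz).trans (connectedComponentIn_eq hxw).symm
  have hcount : (J '' F).Countable := hdisj.countable_of_isOpen
    (by rintro _ ⟨z, -, rfl⟩; exact hU.connectedComponentIn)
    (by rintro _ ⟨z, hz, rfl⟩; exact ⟨Θ z, mem_connectedComponentIn (hΘU z hz)⟩)
  have hcover : F ⊆ ⋃ C ∈ J '' F, F ∩ J ⁻¹' {C} := fun z hz =>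
    mem_biUnion (mem_image_of_mem J hz) ⟨hz, rfl⟩
  have hpiece : ∀ C ∈ J '' F, μ (F ∩ J ⁻¹' {C}) ≤ KMu μ h * volume C := by
    rintro _ ⟨z₀, hz₀, rfl⟩
    refine measure_le_KMu_mul_volume_of_isConnected μ hh hU.connectedComponentIn
      (isConnected_connectedComponentIn_iff.mpr (hΘU z₀ hz₀))
      (hUb.subset (connectedComponentIn_subset _ _)) ?_
    rintro z ⟨hz, hJz⟩
    obtain ⟨hz1, hzh, -⟩ := hF z hz
    refine ⟨hz1, hzh, Θ z, (hΘ z hz).1, ?_⟩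
    rw [← show J z = J z₀ from hJz]
    exact isPreconnected_Icc.subset_connectedComponentIn
      ⟨by linarith, by linarith⟩ (hΘ z hz).2
  calc μ F ≤ ∑' C : J '' F, μ (F ∩ J ⁻¹' {(C : Set ℝ)}) :=
        (μ.mono hcover).trans (measure_biUnion_le μ hcount _)
    _ ≤ ∑' C : J '' F, KMu μ h * volume (C : Set ℝ) :=
        ENNReal.tsum_le_tsum fun C => hpiece C C.2
    _ = KMu μ h * volume (⋃₀ (J '' F)) := by
        rw [ENNReal.tsum_mul_left, measure_sUnion hcount hdisj]
        rintro _ ⟨z, -, rfl⟩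
        exact hU.connectedComponentIn.measurableSet
    _ ≤ KMu μ h * volume U := by
        gcongr
        exact sUnion_subset (by rintro _ ⟨z, -, rfl⟩; exact connectedComponentIn_subset _ _)

lemma exp_toIocMod_mul_I (a x : ℝ) :
    exp (toIocMod Real.two_pi_pos a x * I) = exp (x * I) := by
  rw [toIocMod, zsmul_eq_mul]
  push_cast
  exact exp_mul_I_periodic.sub_int_mul_eq _

lemma measure_le_KMu_mul_volume_of_arcs_mem (μ : Measure ℂ) {S F : Set ℂ} {h : ℝ} (hh : 0 < h)
    (hS : IsOpen S)
    (hF : ∀ z ∈ F, ‖z‖ ≤ 1 ∧ 1 - ‖z‖ < h ∧ ∀ θ φ : ℝ, z = ‖z‖ * exp (θ * I) →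
      |φ - θ| ≤ 1 - ‖z‖ → exp (φ * I) ∈ S) :
    μ F ≤ KMu μ h * volume ((fun θ : ℝ => exp (θ * I)) ⁻¹' S ∩ Ioc 0 (2 * Real.pi)) := by
  set O := (fun θ : ℝ => exp (θ * I)) ⁻¹' S
  have hO : IsOpen O := hS.preimage (by fun_prop)
  have harc : ∀ z ∈ F, ∀ θ : ℝ, z = ‖z‖ * exp (θ * I) →
      Icc (θ - (1 - ‖z‖)) (θ + (1 - ‖z‖)) ⊆ O := fun z hz θ hzθ φ hφ =>
    (hF z hz).2.2 θ φ hzθ (abs_le.mpr ⟨by linarith [hφ.1], by linarith [hφ.2]⟩)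
  by_cases hOall : ∀ x, x ∈ O
  · have hF' : ∀ z ∈ F, ‖z‖ ≤ 1 ∧ 1 - ‖z‖ < min ((Real.pi - -Real.pi) / 2) h ∧
        ∃ θ ∈ Ioc (-Real.pi) Real.pi, z = ‖z‖ * exp (θ * I) := by
      intro z hz
      obtain ⟨hz1, hzh, -⟩ := hF z hz
      refine ⟨hz1, lt_min ?_ hzh, arg z, ⟨neg_pi_lt_arg z, arg_le_pi z⟩,
        (norm_mul_exp_arg_mul_I z).symm⟩
      linarith [norm_nonneg z, Real.pi_gt_three]
    calc μ F ≤ KMu μ h * ENNReal.ofReal (Real.pi - -Real.pi) :=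
          measure_le_KMu_mul_of_forall_mem_arc μ (by linarith [Real.pi_pos]) hh hF'
      _ = KMu μ h * volume (O ∩ Ioc 0 (2 * Real.pi)) := by
          rw [eq_univ_of_forall hOall, univ_inter, Real.volume_Ioc]; ring_nf
  push Not at hOall
  obtain ⟨θ₀, hθ₀⟩ := hOall
  have hθ₀' : θ₀ + 2 * Real.pi ∉ O := by
    simpa [O, exp_mul_I_periodic θ₀] using hθ₀
  have hF' : ∀ z ∈ F, ‖z‖ ≤ 1 ∧ 1 - ‖z‖ < h ∧ ∃ θ : ℝ, z = ‖z‖ * exp (θ * I) ∧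
      Icc (θ - (1 - ‖z‖)) (θ + (1 - ‖z‖)) ⊆ O ∩ Ioo θ₀ (θ₀ + 2 * Real.pi) := by
    intro z hz
    obtain ⟨hz1, hzh, -⟩ := hF z hz
    set θ := toIocMod Real.two_pi_pos θ₀ (arg z)
    have hzθ : z = ‖z‖ * exp (θ * I) := by
      rw [exp_toIocMod_mul_I, norm_mul_exp_arg_mul_I]
    have hθ := toIocMod_mem_Ioc Real.two_pi_pos θ₀ (arg z)
    have hsub := harc z hz θ hzθ
    have hlo : θ₀ < θ - (1 - ‖z‖) := by
      by_contra hle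
      exact hθ₀ (hsub ⟨not_lt.mp hle, by linarith [hθ.1, norm_nonneg z]⟩)
    have hhi : θ + (1 - ‖z‖) < θ₀ + 2 * Real.pi := by
      by_contra hle
      exact hθ₀' (hsub ⟨by linarith [hθ.2], not_lt.mp hle⟩)
    exact ⟨hz1, hzh, θ, hzθ, subset_inter hsub (Icc_subset_Ioo hlo hhi)⟩
  have hperiodic : ∀ g : AddSubgroup.zmultiples (2 * Real.pi), (g +ᵥ ·) ⁻¹' O = O := by
    rintro ⟨g, hg⟩
    obtain ⟨n, rfl⟩ := AddSubgroup.mem_zmultiples_iff.mp hg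
    ext x
    simp only [O, mem_preimage, AddSubgroup.vadd_def, vadd_eq_add, zsmul_eq_mul, add_comm _ x]
    push_cast
    exact iff_of_eq (congrArg (· ∈ S) ((exp_mul_I_periodic.int_mul n) x))
  calc μ F ≤ KMu μ h * volume (O ∩ Ioo θ₀ (θ₀ + 2 * Real.pi)) :=
        measure_le_KMu_mul_volume_of_isOpen μ hh (hO.inter isOpen_Ioo)
          (Metric.isBounded_Ioo _ _ |>.subset inter_subset_right) hF'
    _ ≤ KMu μ h * volume (O ∩ Ioc θ₀ (θ₀ + 2 * Real.pi)) := by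
        gcongr; exact Ioo_subset_Ioc_self
    _ = KMu μ h * volume (O ∩ Ioc 0 (0 + 2 * Real.pi)) := by
        congr 1
        exact (isAddFundamentalDomain_Ioc Real.two_pi_pos θ₀).measure_set_eq
          (isAddFundamentalDomain_Ioc Real.two_pi_pos 0) hO.measurableSet hperiodic
    _ = KMu μ h * volume (O ∩ Ioc 0 (2 * Real.pi)) := by rw [zero_add]

lemma isOpen_setOf_lt_maxFun (f : ℂ → ℂ) (c : ENNReal) : IsOpen {w | c < maxFun f w} := by
  have hunion : {w | c < maxFun f w} =
      ⋃ z ∈ {z : ℂ | ‖z‖ < 1 ∧ c < ENNReal.ofReal ‖f z‖}, Metric.ball z (3 * (1 - ‖z‖)) := by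
    ext w
    simp only [maxFun, lt_iSup_iff, Subtype.exists, mem_ofPred_eq, mem_iUnion, Metric.mem_ball,
      dist_eq, exists_prop]
    constructor
    · rintro ⟨z, ⟨hz, hwz⟩, hc⟩; exact ⟨z, ⟨hz, hc⟩, hwz⟩
    · rintro ⟨z, ⟨hz, hc⟩, hwz⟩; exact ⟨z, ⟨hz, hwz⟩, hc⟩
  rw [hunion]
  exact isOpen_biUnion fun z _ => Metric.isOpen_ball

lemma norm_exp_mul_I_sub_exp_mul_I_le (φ θ : ℝ) : ‖exp (φ * I) - exp (θ * I)‖ ≤ |φ - θ| := by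
  have hfactor : exp (φ * I) - exp (θ * I) = exp (θ * I) * (exp (I * (φ - θ : ℝ)) - 1) := by
    rw [mul_sub, ← exp_add]; push_cast; ring_nf
  rw [hfactor, norm_mul, norm_exp_ofReal_mul_I, one_mul]
  exact Real.norm_exp_I_mul_ofReal_sub_one_le

lemma lt_maxFun_exp_mul_I {f : ℂ → ℂ} {t : ℝ} (ht : 0 ≤ t) {z : ℂ} (hz : ‖z‖ < 1)
    (hfz : t < ‖f z‖) {θ φ : ℝ} (hzθ : z = ‖z‖ * exp (θ * I)) (hφ : |φ - θ| ≤ 1 - ‖z‖) :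
    ENNReal.ofReal t < maxFun f (exp (φ * I)) := by
  have hradial : ‖exp (θ * I) - z‖ = 1 - ‖z‖ := by
    nth_rewrite 1 [hzθ]
    rw [← one_sub_mul, norm_mul, norm_exp_ofReal_mul_I, mul_one, ← ofReal_one, ← ofReal_sub,
      norm_real, Real.norm_of_nonneg (by linarith)]
  have hdist : ‖exp (φ * I) - z‖ < 3 * (1 - ‖z‖) :=
    calc ‖exp (φ * I) - z‖ ≤ ‖exp (φ * I) - exp (θ * I)‖ + ‖exp (θ * I) - z‖ :=
          norm_sub_le_norm_sub_add_norm_sub _ _ _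
      _ ≤ |φ - θ| + (1 - ‖z‖) := by rw [hradial]; gcongr; exact norm_exp_mul_I_sub_exp_mul_I_le φ θ
      _ < 3 * (1 - ‖z‖) := by linarith
  exact lt_iSup_iff.mpr ⟨⟨z, hz, hdist⟩, (ENNReal.ofReal_lt_ofReal_iff_of_nonneg ht).mpr hfz⟩

lemma ofReal_two_pi_mul_circleMeasure {S : Set ℂ} (hS : MeasurableSet S) :
    ENNReal.ofReal (2 * Real.pi) * circleMeasure S =
      volume ((fun θ : ℝ => exp (θ * I)) ⁻¹' S ∩ Ioc 0 (2 * Real.pi)) := by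
  have hexp : Measurable fun θ : ℝ => exp (θ * I) := by fun_prop
  rw [circleMeasure, Measure.smul_apply, smul_eq_mul, ← mul_assoc,
    ENNReal.mul_inv_cancel (by simpa using Real.two_pi_pos) ENNReal.ofReal_ne_top, one_mul,
    Measure.map_apply hexp hS, Measure.restrict_apply (hexp hS)]

end

theorem stmt_12_general (μ : Measure ℂ) (f : ℂ → ℂ) (h : ℝ) (hh0 : 0 < h) (t : ℝ) (ht : 0 < t) :
    μ {z : ℂ | ‖z‖ < 1 ∧ 1 - h < ‖z‖ ∧ t < ‖f z‖}
      ≤ ENNReal.ofReal (2 * Real.pi) * KMu μ h *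
        circleMeasure {w : ℂ | ENNReal.ofReal t < maxFun f w} := by
  have hS := isOpen_setOf_lt_maxFun f (ENNReal.ofReal t)
  calc μ {z : ℂ | ‖z‖ < 1 ∧ 1 - h < ‖z‖ ∧ t < ‖f z‖}
      ≤ KMu μ h * volume ((fun θ : ℝ => Complex.exp (θ * Complex.I)) ⁻¹'
          {w | ENNReal.ofReal t < maxFun f w} ∩ Set.Ioc 0 (2 * Real.pi)) :=
        measure_le_KMu_mul_volume_of_arcs_mem μ hh0 hS fun z ⟨hz, hzh, hfz⟩ =>
          ⟨hz.le, by linarith, fun _ _ hzθ hφ => lt_maxFun_exp_mul_I ht.le hz hfz hzθ hφ⟩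
    _ = ENNReal.ofReal (2 * Real.pi) * KMu μ h *
          circleMeasure {w : ℂ | ENNReal.ofReal t < maxFun f w} := by
        rw [mul_right_comm, ofReal_two_pi_mul_circleMeasure hS.measurableSet, mul_comm]

theorem stmt_12 (μ : Measure ℂ) [IsFiniteMeasure μ]
    (hμ : μ (Metric.ball (0 : ℂ) 1)ᶜ = 0)
    (f : ℂ → ℂ) (hf : DifferentiableOn ℂ f (Metric.ball 0 1))
    (h : ℝ) (hh0 : 0 < h) (hh1 : h ≤ 1) (t : ℝ) (ht : 0 < t) :
    μ {z : ℂ | ‖z‖ < 1 ∧ 1 - h < ‖z‖ ∧ t < ‖f z‖}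
      ≤ ENNReal.ofReal (2 * Real.pi) * KMu μ h *
        circleMeasure {w : ℂ | ENNReal.ofReal t < maxFun f w} :=
  stmt_12_general μ f h hh0 t ht
end
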